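/- arXiv:math/0402144 — 3 statements merged into one kernel-verified Lean document; each statement's English description precedes it below -/
import Mathlib

section
/- Let M be an N×N primitive nonnegative real matrix with primitivity index ℓ, let τ := τ(M^ℓ) be the Birkhoff coefficient of M^ℓ, and let v_M ∈ Δ_N be the right Perron eigenvector of M. Then for every x ∈ Δ_N and every m ∈ ℕ: d(F_M^m x, v_M) ≤ (τ^{⌊m/ℓ⌋}/(1−τ)) · d_M(x), where d_M(x) := min(ℓ·d(x, F_M x), d(x, F_M^ℓ x)). -/
open scoped BigOperators

/-!
On positive vectors the projective distance `d` is a pseudometric for which `F_M` is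
nonexpansive, and Birkhoff's inequality `d(Ay, Az) ≤ τ(A) d(y, z)` for the positive matrix
`A = M^ℓ` makes `F_M^ℓ` a `τ`-contraction. The Perron vector is fixed by `F_M`, so the
fixed-point estimate `d(x, v) ≤ d(x, F_M^ℓ x) / (1 - τ)` of a contraction, propagated along the
iterates, gives the bound; the triangle inequality gives `d(x, F_M^ℓ x) ≤ ℓ d(x, F_M x)`.

Birkhoff's inequality is proved for one pair of rows `i, k` at a time: with `r = y / z ∈ [α, β]`,
`(Ay)_i (Az)_k ≤ K (Az)_i (Ay)_k` compares two weighted sums of `r` whose weights satisfy the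
cross-ratio bound given by `Γ(A)`. The inequality is linear in `r`, so it suffices to check it at
the vertices of the box `[α, β]^N`, where it collapses to a two-block inequality, and that one
reduces to the scalar inequality `s + Γ ≤ s^τ (1 + Γ s)` for `s ≥ 1`.
-/

open Matrix

namespace PerronApprox

/-- The open simplex `Δ_N`. -/
def simplex (N : ℕ) : Set (Fin N → ℝ) :=
  {x | (∀ i, 0 < x i) ∧ ∑ i, x i = 1}

/-- The projective (Hilbert) distance. -/
noncomputable def projDist {N : ℕ} (x y : Fin N → ℝ) : ℝ :=
  Real.log ((⨆ i, x i / y i) / (⨅ i, x i / y i))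

/-- The normalized action `F_M x = Mx / |Mx|₁` of a matrix on the simplex. -/
noncomputable def FM {N : ℕ} (M : Matrix (Fin N) (Fin N) ℝ) (x : Fin N → ℝ) :
    Fin N → ℝ :=
  fun i => M.mulVec x i / ∑ j, M.mulVec x j

open Classical in
/-- `Γ(M)` for a positive matrix (and `0` otherwise). -/
noncomputable def birkGamma {N : ℕ} (M : Matrix (Fin N) (Fin N) ℝ) : ℝ :=
  if ∀ i j, 0 < M i j then
    ⨅ i, ⨅ j, ⨅ k, ⨅ l, Real.sqrt (M i j * M k l / (M i l * M k j))
  else 0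

/-- The Birkhoff contraction coefficient `τ(M) = (1 − Γ(M))/(1 + Γ(M))`. -/
noncomputable def birkTau {N : ℕ} (M : Matrix (Fin N) (Fin N) ℝ) : ℝ :=
  (1 - birkGamma M) / (1 + birkGamma M)

/-- `d_M(x) = min (ℓ · d(x, F_M x), d(x, F_M^ℓ x))`. -/
noncomputable def dMin {N : ℕ} (M : Matrix (Fin N) (Fin N) ℝ) (ℓ : ℕ)
    (x : Fin N → ℝ) : ℝ :=
  min ((ℓ : ℝ) * projDist x (FM M x)) (projDist x ((FM M)^[ℓ] x))

/-- `M` is primitive with primitivity index `ℓ`. -/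
def PrimIndex {N : ℕ} (M : Matrix (Fin N) (Fin N) ℝ) (ℓ : ℕ) : Prop :=
  0 < ℓ ∧ (∀ i j, 0 < (M ^ ℓ) i j) ∧
    ∀ k, 0 < k → k < ℓ → ¬ ∀ i j, 0 < (M ^ k) i j


section Iteration

variable {α : Type*} {d : α → α → ℝ} {S : Set α} {f : α → α}

theorem dist_iterate_iterate_le (hf : Set.MapsTo f S S)
    (hlip : ∀ x ∈ S, ∀ y ∈ S, d (f x) (f y) ≤ d x y) (n : ℕ) {x y : α} (hx : x ∈ S)
    (hy : y ∈ S) : d (f^[n] x) (f^[n] y) ≤ d x y := by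
  induction n with
  | zero => exact le_rfl
  | succ n ih =>
    rw [Function.iterate_succ_apply', Function.iterate_succ_apply']
    exact (hlip _ (hf.iterate n hx) _ (hf.iterate n hy)).trans ih

theorem dist_iterate_le_pow_mul (hf : Set.MapsTo f S S) {τ : ℝ} (hτ : 0 ≤ τ)
    (hcontr : ∀ x ∈ S, ∀ y ∈ S, d (f x) (f y) ≤ τ * d x y) (n : ℕ) {x y : α} (hx : x ∈ S)
    (hy : y ∈ S) : d (f^[n] x) (f^[n] y) ≤ τ ^ n * d x y := by
  induction n with
  | zero => simp
  | succ n ih =>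
    rw [Function.iterate_succ_apply', Function.iterate_succ_apply', pow_succ', mul_assoc]
    exact (hcontr _ (hf.iterate n hx) _ (hf.iterate n hy)).trans
      (mul_le_mul_of_nonneg_left ih hτ)

theorem dist_self_iterate_le_mul (hf : Set.MapsTo f S S)
    (htri : ∀ x ∈ S, ∀ y ∈ S, ∀ z ∈ S, d x z ≤ d x y + d y z)
    (hlip : ∀ x ∈ S, ∀ y ∈ S, d (f x) (f y) ≤ d x y) (hself : ∀ x ∈ S, d x x = 0)
    {x : α} (hx : x ∈ S) (n : ℕ) : d x (f^[n] x) ≤ n * d x (f x) := by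
  induction n with
  | zero => simp [hself x hx]
  | succ n ih =>
    have hstep : d (f^[n] x) (f^[n + 1] x) ≤ d x (f x) := by
      rw [Function.iterate_succ_apply]
      exact dist_iterate_iterate_le hf hlip n hx (hf hx)
    push_cast
    linarith [htri _ hx _ (hf.iterate n hx) _ (hf.iterate (n + 1) hx)]

theorem dist_le_of_contracting_of_fixedPoint {g : α → α} (hg : Set.MapsTo g S S)
    (htri : ∀ x ∈ S, ∀ y ∈ S, ∀ z ∈ S, d x z ≤ d x y + d y z) {τ : ℝ} (hτ : τ < 1)
    (hcontr : ∀ x ∈ S, ∀ y ∈ S, d (g x) (g y) ≤ τ * d x y) {v : α} (hv : v ∈ S)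
    (hfix : g v = v) {x : α} (hx : x ∈ S) : d x v ≤ d x (g x) / (1 - τ) := by
  rw [le_div_iff₀ (sub_pos.2 hτ)]
  have hcv := hcontr x hx v hv
  rw [hfix] at hcv
  linarith [htri x hx (g x) (hg hx) v hv]

theorem dist_iterate_le_of_contracting_iterate (hf : Set.MapsTo f S S)
    (htri : ∀ x ∈ S, ∀ y ∈ S, ∀ z ∈ S, d x z ≤ d x y + d y z)
    (hlip : ∀ x ∈ S, ∀ y ∈ S, d (f x) (f y) ≤ d x y) {ℓ : ℕ} {τ : ℝ} (hτ0 : 0 ≤ τ)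
    (hτ1 : τ < 1) (hcontr : ∀ x ∈ S, ∀ y ∈ S, d (f^[ℓ] x) (f^[ℓ] y) ≤ τ * d x y)
    {v : α} (hv : v ∈ S) (hfix : f v = v) {x : α} (hx : x ∈ S) (m : ℕ) :
    d (f^[m] x) v ≤ τ ^ (m / ℓ) / (1 - τ) * d x (f^[ℓ] x) := by
  have hsplit : f^[m] = (f^[ℓ])^[m / ℓ] ∘ f^[m % ℓ] := by
    rw [← Function.iterate_mul, ← Function.iterate_add, Nat.div_add_mod]
  have hfixℓ : ∀ n, f^[n] v = v := Function.iterate_fixed hfix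
  calc d (f^[m] x) v
      = d ((f^[ℓ])^[m / ℓ] (f^[m % ℓ] x)) ((f^[ℓ])^[m / ℓ] (f^[m % ℓ] v)) := by
        rw [hsplit, Function.comp_apply, hfixℓ, Function.iterate_fixed (hfixℓ ℓ)]
    _ ≤ τ ^ (m / ℓ) * d (f^[m % ℓ] x) (f^[m % ℓ] v) :=
        dist_iterate_le_pow_mul (hf.iterate ℓ) hτ0 hcontr _ (hf.iterate _ hx) (hf.iterate _ hv)
    _ ≤ τ ^ (m / ℓ) * (d x (f^[ℓ] x) / (1 - τ)) := by
        gcongr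
        exact (dist_iterate_iterate_le hf hlip _ hx hv).trans
          (dist_le_of_contracting_of_fixedPoint (hf.iterate ℓ) htri hτ1 hcontr hv (hfixℓ ℓ) hx)
    _ = τ ^ (m / ℓ) / (1 - τ) * d x (f^[ℓ] x) := by ring

end Iteration

theorem lt_ciInf_of_finite {ι : Type*} [Nonempty ι] [Finite ι] {f : ι → ℝ} {a : ℝ}
    (h : ∀ i, a < f i) : a < ⨅ i, f i := by
  obtain ⟨i, hi⟩ := exists_eq_ciInf_of_finite (f := f)
  exact hi ▸ h i

section ProjDist

variable {N : ℕ} {x y z : Fin N → ℝ}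

theorem iInf_div_mul_le (hy : ∀ i, 0 < y i) (i : Fin N) : (⨅ j, x j / y j) * y i ≤ x i :=
  (le_div_iff₀ (hy i)).1 (ciInf_le (Finite.bddBelow_range _) i)

theorem le_iSup_div_mul (hy : ∀ i, 0 < y i) (i : Fin N) : x i ≤ (⨆ j, x j / y j) * y i :=
  (div_le_iff₀ (hy i)).1 (le_ciSup (Finite.bddAbove_range fun j => x j / y j) i)

theorem projDist_smul_smul {c c' : ℝ} (hc : 0 < c) (hc' : 0 < c') :
    projDist (c • x) (c' • y) = projDist x y := by
  have hcc' : 0 < c / c' := div_pos hc hc'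
  simp only [projDist, Pi.smul_apply, smul_eq_mul, mul_div_mul_comm c, ←
    Real.mul_iSup_of_nonneg hcc'.le, ← Real.mul_iInf_of_nonneg hcc'.le,
    mul_div_mul_left _ _ hcc'.ne']

variable [Nonempty (Fin N)]

theorem iInf_div_pos (hx : ∀ i, 0 < x i) (hy : ∀ i, 0 < y i) : 0 < ⨅ j, x j / y j :=
  lt_ciInf_of_finite fun i => div_pos (hx i) (hy i)

theorem iInf_div_le_iSup_div : (⨅ j, x j / y j) ≤ ⨆ j, x j / y j :=
  ciInf_le_ciSup (Finite.bddBelow_range _) (Finite.bddAbove_range _)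

theorem projDist_le_log_div {a b : ℝ} (ha : 0 < a) (hy : ∀ i, 0 < y i)
    (hlo : ∀ i, a * y i ≤ x i) (hhi : ∀ i, x i ≤ b * y i) :
    projDist x y ≤ Real.log (b / a) := by
  have hinf : a ≤ ⨅ i, x i / y i := le_ciInf fun i => (le_div_iff₀ (hy i)).2 (hlo i)
  have hsup : (⨆ i, x i / y i) ≤ b := ciSup_le fun i => (div_le_iff₀ (hy i)).2 (hhi i)
  have hsup_pos : 0 < ⨆ i, x i / y i := ha.trans_le (hinf.trans iInf_div_le_iSup_div)
  exact Real.log_le_log (div_pos hsup_pos (ha.trans_le hinf))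
    (div_le_div₀ (hsup_pos.le.trans hsup) hsup ha hinf)

theorem projDist_le_log_of_mul_le {K : ℝ} (hK : 0 < K) (hx : ∀ i, 0 < x i)
    (hy : ∀ i, 0 < y i) (h : ∀ i k, x i * y k ≤ K * (y i * x k)) :
    projDist x y ≤ Real.log K := by
  have ha := iInf_div_pos hx hy
  have hhi : ∀ i, x i ≤ K * (⨅ j, x j / y j) * y i := fun i => by
    rw [mul_comm K, mul_assoc, ← div_le_iff₀ (mul_pos hK (hy i))]
    exact le_ciInf fun k => by
      rw [div_le_div_iff₀ (mul_pos hK (hy i)) (hy k)]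
      linarith [h i k]
  simpa [ha.ne'] using projDist_le_log_div ha hy (iInf_div_mul_le hy) hhi

theorem projDist_triangle (hx : ∀ i, 0 < x i) (hy : ∀ i, 0 < y i) (hz : ∀ i, 0 < z i) :
    projDist x z ≤ projDist x y + projDist y z := by
  have hxy := iInf_div_pos hx hy
  have hyz := iInf_div_pos hy hz
  have hlo : ∀ i, (⨅ j, x j / y j) * (⨅ j, y j / z j) * z i ≤ x i := fun i =>
    calc (⨅ j, x j / y j) * (⨅ j, y j / z j) * z i
        = (⨅ j, x j / y j) * ((⨅ j, y j / z j) * z i) := mul_assoc _ _ _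
      _ ≤ (⨅ j, x j / y j) * y i := by gcongr; exact iInf_div_mul_le hz i
      _ ≤ x i := iInf_div_mul_le hy i
  have hhi : ∀ i, x i ≤ (⨆ j, x j / y j) * (⨆ j, y j / z j) * z i := fun i =>
    calc x i ≤ (⨆ j, x j / y j) * y i := le_iSup_div_mul hy i
      _ ≤ (⨆ j, x j / y j) * ((⨆ j, y j / z j) * z i) := by
          gcongr
          · exact hxy.le.trans iInf_div_le_iSup_div
          · exact le_iSup_div_mul hz i
      _ = (⨆ j, x j / y j) * (⨆ j, y j / z j) * z i := (mul_assoc _ _ _).symm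
  have := projDist_le_log_div (mul_pos hxy hyz) hz hlo hhi
  rwa [mul_div_mul_comm, Real.log_mul (div_pos (hxy.trans_le iInf_div_le_iSup_div) hxy).ne'
    (div_pos (hyz.trans_le iInf_div_le_iSup_div) hyz).ne'] at this

theorem projDist_self (hx : ∀ i, 0 < x i) : projDist x x = 0 := by
  simp [projDist, fun i => div_self (hx i).ne']

end ProjDist

section BirkhoffInequality

theorem add_le_rpow_mul_one_add {s t : ℝ} (hs : 1 ≤ s) (ht0 : 0 ≤ t) (ht1 : t ≤ 1) :
    s + t ≤ s ^ ((1 - t) / (1 + t)) * (1 + t * s) := by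
  set τ := (1 - t) / (1 + t)
  have hτ0 : 0 ≤ τ := div_nonneg (by linarith) (by linarith)
  have hτ1 : τ ≤ 1 := (div_le_one (by linarith)).2 (by linarith)
  have hτt : t * (1 + τ) = 1 - τ := by simp only [τ]; field_simp; ring
  let φ : ℝ → ℝ := fun a => Real.exp (τ * a) * (1 + t * Real.exp a) - Real.exp a
  have hφ : ∀ a, HasDerivAt φ
      (τ * Real.exp (τ * a) + (1 - τ) * Real.exp ((1 + τ) * a) - Real.exp a) a := by
    intro a
    have hlin : HasDerivAt (fun a => Real.exp (τ * a)) (Real.exp (τ * a) * τ) a := by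
      simpa using ((hasDerivAt_id a).const_mul τ).exp
    have hrat : HasDerivAt (fun a => 1 + t * Real.exp a) (t * Real.exp a) a := by
      simpa using ((Real.hasDerivAt_exp a).const_mul t).const_add 1
    refine ((hlin.mul hrat).sub (Real.hasDerivAt_exp a)).congr_deriv ?_
    rw [show (1 + τ) * a = τ * a + a by ring, Real.exp_add, ← hτt]
    ring
  -- `φ' ≥ 0` is convexity of `exp` at the points `τ a` and `(1 + τ) a` with weights `τ, 1 - τ`.
  have hφ_mono : Monotone φ := by
    refine monotone_of_deriv_nonneg (fun a => (hφ a).differentiableAt) fun a => ?_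
    rw [(hφ a).deriv]
    have := convexOn_exp.2 (Set.mem_univ (τ * a)) (Set.mem_univ ((1 + τ) * a)) hτ0
      (by linarith : 0 ≤ 1 - τ) (by ring)
    simp only [smul_eq_mul] at this
    rw [show τ * (τ * a) + (1 - τ) * ((1 + τ) * a) = a by ring] at this
    linarith
  have := hφ_mono (Real.log_nonneg hs)
  simp only [φ, mul_zero, Real.exp_zero, Real.exp_log (by linarith : (0:ℝ) < s)] at this
  rw [Real.rpow_def_of_pos (by linarith), mul_comm (Real.log s)]
  linarith

theorem two_block_poly_le {s t W X W' X' : ℝ} (hs : 1 ≤ s) (ht0 : 0 < t) (ht1 : t ≤ 1)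
    (hW : 0 ≤ W) (hX : 0 ≤ X) (hW' : 0 ≤ W') (hX' : 0 ≤ X')
    (hcross : t ^ 2 * (W * X') ≤ X * W') :
    (s ^ 2 * W + X) * (W' + X') * (1 + s * t) ^ 2 ≤
      (s + t) ^ 2 * ((W + X) * (s ^ 2 * W' + X')) := by
  have hs2 : 0 ≤ s ^ 2 - 1 := by nlinarith
  have ht2 : 0 ≤ 1 - t ^ 2 := by nlinarith
  set A := (s + t) ^ 2 * (s ^ 2 * W' + X') - s ^ 2 * (W' + X') * (1 + s * t) ^ 2
  set B := (s + t) ^ 2 * (s ^ 2 * W' + X') - (W' + X') * (1 + s * t) ^ 2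
  have hB : 0 ≤ B := by
    have : B = W' * ((s ^ 2 - 1) * (s ^ 2 + 2 * s * t + 1)) +
        X' * ((s - 1) * (1 - t) * (1 + s) * (1 + t)) := by ring
    rw [this]
    have : 0 ≤ s - 1 := by linarith
    have : 0 ≤ 1 - t := by linarith
    positivity
  suffices 0 ≤ W * A + X * B by nlinarith
  rcases le_or_gt 0 A with hA | hA
  · positivity
  rcases hX'.eq_or_lt with rfl | hX'
  · have : A = s ^ 2 * W' * ((s ^ 2 - 1) * (1 - t ^ 2)) := by ring
    exact absurd hA (not_lt.2 (this ▸ by positivity))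
  -- For `A < 0` the cross condition bounds `W` from above, and then
  -- `t² X' (W A + X B) ≥ X (W' A + t² X' B) = X (s² - 1)(1 - t²)(s W' - t X')² ≥ 0`.
  have hkey : W' * A + t ^ 2 * X' * B =
      (s ^ 2 - 1) * (1 - t ^ 2) * (s * W' - t * X') ^ 2 := by ring
  have : 0 ≤ t ^ 2 * X' * (W * A + X * B) := by
    nlinarith [mul_nonneg hX (mul_nonneg (mul_nonneg hs2 ht2) (sq_nonneg (s * W' - t * X')))]
  exact (mul_nonneg_iff_of_pos_left (by positivity)).1 this

theorem two_block_le {α β t W X W' X' : ℝ} (hα : 0 < α) (hαβ : α ≤ β) (ht0 : 0 < t)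
    (ht1 : t ≤ 1) (hW : 0 ≤ W) (hX : 0 ≤ X) (hW' : 0 ≤ W') (hX' : 0 ≤ X')
    (hcross : t ^ 2 * (W * X') ≤ X * W') :
    (β * W + α * X) * (W' + X') ≤
      (β / α) ^ ((1 - t) / (1 + t)) * ((W + X) * (β * W' + α * X')) := by
  set K := (β / α) ^ ((1 - t) / (1 + t))
  set s := √(β / α)
  have hb : 1 ≤ β / α := (one_le_div hα).2 hαβ
  have hs : 1 ≤ s := Real.one_le_sqrt.2 hb
  have hβ : β = s ^ 2 * α := by rw [Real.sq_sqrt (by linarith), div_mul_cancel₀ _ hα.ne']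
  have hK : (s + t) ^ 2 ≤ K * (1 + s * t) ^ 2 := by
    calc (s + t) ^ 2 ≤ (s ^ ((1 - t) / (1 + t)) * (1 + t * s)) ^ 2 := by
          gcongr
          exact add_le_rpow_mul_one_add hs ht0.le ht1
      _ = (s * s) ^ ((1 - t) / (1 + t)) * (1 + s * t) ^ 2 := by
          rw [Real.mul_rpow (by linarith) (by linarith)]
          ring
      _ = K * (1 + s * t) ^ 2 := by rw [Real.mul_self_sqrt (by linarith)]
  have hpoly := two_block_poly_le hs ht0 ht1 hW hX hW' hX' hcross
  refine le_of_mul_le_mul_right ?_ (by positivity : 0 < (1 + s * t) ^ 2)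
  rw [hβ]
  calc (s ^ 2 * α * W + α * X) * (W' + X') * (1 + s * t) ^ 2
      = α * ((s ^ 2 * W + X) * (W' + X') * (1 + s * t) ^ 2) := by ring
    _ ≤ α * ((s + t) ^ 2 * ((W + X) * (s ^ 2 * W' + X'))) :=
        mul_le_mul_of_nonneg_left hpoly hα.le
    _ ≤ α * (K * (1 + s * t) ^ 2 * ((W + X) * (s ^ 2 * W' + X'))) := by gcongr
    _ = K * ((W + X) * (s ^ 2 * α * W' + α * X')) * (1 + s * t) ^ 2 := by ring

theorem sum_mul_mul_sum_le {ι : Type*} [Fintype ι] {w w' r : ι → ℝ} {α β t : ℝ} (hα : 0 < α)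
    (hαβ : α ≤ β) (ht0 : 0 < t) (ht1 : t ≤ 1) (hw : ∀ j, 0 ≤ w j) (hw' : ∀ j, 0 ≤ w' j)
    (hr : ∀ j, r j ∈ Set.Icc α β) (hcross : ∀ j j', t ^ 2 * (w j * w' j') ≤ w j' * w' j) :
    (∑ j, w j * r j) * ∑ j, w' j ≤
      (β / α) ^ ((1 - t) / (1 + t)) * ((∑ j, w j) * ∑ j, w' j * r j) := by
  classical
  set K := (β / α) ^ ((1 - t) / (1 + t))
  -- The difference of the two sides is linear in `r`, hence largest at a vertex of the box.
  set c : ι → ℝ := fun j => w j * ∑ k, w' k - K * (∑ k, w k) * w' j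
  have hlin : ∀ u : ι → ℝ, (∑ j, w j * u j) * ∑ j, w' j - K * ((∑ j, w j) * ∑ j, w' j * u j)
      = ∑ j, c j * u j := fun u => by
    simp only [c, sub_mul, Finset.sum_sub_distrib, Finset.sum_mul, Finset.mul_sum]
    congr 1
    · rw [Finset.sum_comm]
      exact Finset.sum_congr rfl fun j _ => Finset.sum_congr rfl fun k _ => by ring
    · exact Finset.sum_congr rfl fun j _ => Finset.sum_congr rfl fun k _ => by ring
  set T := Finset.univ.filter fun j => 0 ≤ c j
  set v : ι → ℝ := fun j => if 0 ≤ c j then β else α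
  have hvertex : ∑ j, c j * r j ≤ ∑ j, c j * v j := Finset.sum_le_sum fun j _ => by
    by_cases hc : 0 ≤ c j
    · simpa [v, hc] using mul_le_mul_of_nonneg_left (hr j).2 hc
    · simpa [v, hc] using mul_le_mul_of_nonpos_left (hr j).1 (not_le.1 hc).le
  have hsplit : ∀ u : ι → ℝ, ∑ j, u j * v j = β * ∑ j ∈ T, u j + α * ∑ j ∈ Tᶜ, u j := by
    intro u
    rw [← Finset.sum_add_sum_compl T, Finset.mul_sum, Finset.mul_sum]
    congr 1 <;> refine Finset.sum_congr rfl fun j hj => ?_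
    · simp [v, (Finset.mem_filter.1 hj).2, mul_comm]
    · simp [v, show ¬0 ≤ c j by simpa [T] using hj, mul_comm]
  have hsum : ∀ u : ι → ℝ, ∑ j, u j = ∑ j ∈ T, u j + ∑ j ∈ Tᶜ, u j := fun u =>
    (Finset.sum_add_sum_compl T u).symm
  have hcrossT : t ^ 2 * ((∑ j ∈ T, w j) * ∑ j ∈ Tᶜ, w' j) ≤
      (∑ j ∈ Tᶜ, w j) * ∑ j ∈ T, w' j := by
    rw [Finset.sum_mul_sum, Finset.sum_mul_sum, Finset.mul_sum, Finset.sum_comm (s := Tᶜ)]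
    refine Finset.sum_le_sum fun j _ => ?_
    rw [Finset.mul_sum]
    exact Finset.sum_le_sum fun j' _ => hcross j j'
  have hblock := two_block_le hα hαβ ht0 ht1 (Finset.sum_nonneg fun j _ => hw j)
    (Finset.sum_nonneg fun j _ => hw j) (Finset.sum_nonneg fun j _ => hw' j)
    (Finset.sum_nonneg fun j _ => hw' j) hcrossT
  rw [← hsplit, ← hsplit, ← hsum, ← hsum, ← sub_nonpos, hlin] at hblock
  linarith [hlin r]

end BirkhoffInequality

section NonnegMatrix

variable {N : ℕ} {M : Matrix (Fin N) (Fin N) ℝ} {x y : Fin N → ℝ}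

theorem mulVec_pos (hM : ∀ i j, 0 ≤ M i j) (hrow : ∀ i, ∃ j, 0 < M i j)
    (hx : ∀ i, 0 < x i) (i : Fin N) : 0 < (M *ᵥ x) i := by
  obtain ⟨j, hj⟩ := hrow i
  exact Finset.sum_pos' (fun k _ => mul_nonneg (hM i k) (hx k).le)
    ⟨j, Finset.mem_univ j, mul_pos hj (hx j)⟩

theorem pow_mulVec_pos (hM : ∀ i j, 0 ≤ M i j) (hrow : ∀ i, ∃ j, 0 < M i j)
    (hx : ∀ i, 0 < x i) (n : ℕ) : ∀ i, 0 < (M ^ n *ᵥ x) i := by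
  induction n with
  | zero => simpa using hx
  | succ n ih =>
    rw [pow_succ', ← mulVec_mulVec]
    exact mulVec_pos hM hrow ih

theorem exists_pos_of_pow_pos (hM : ∀ i j, 0 ≤ M i j) {ℓ : ℕ} (hℓ : 0 < ℓ)
    (hpow : ∀ i j, 0 < (M ^ ℓ) i j) (i : Fin N) : ∃ j, 0 < M i j := by
  by_contra! hi
  obtain ⟨k, rfl⟩ := Nat.exists_eq_add_one_of_ne_zero hℓ.ne'
  have := hpow i i
  rw [pow_succ', mul_apply, Finset.sum_eq_zero fun j _ => by
    rw [le_antisymm (hi j) (hM i j), zero_mul]] at this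
  exact this.false

theorem mulVec_le_mulVec (hM : ∀ i j, 0 ≤ M i j) (h : ∀ j, x j ≤ y j) (i : Fin N) :
    (M *ᵥ x) i ≤ (M *ᵥ y) i :=
  Finset.sum_le_sum fun j (_ : j ∈ Finset.univ) => mul_le_mul_of_nonneg_left (h j) (hM i j)

theorem projDist_mulVec_le [Nonempty (Fin N)] (hM : ∀ i j, 0 ≤ M i j)
    (hMy : ∀ i, 0 < (M *ᵥ y) i) (hx : ∀ i, 0 < x i) (hy : ∀ i, 0 < y i) :
    projDist (M *ᵥ x) (M *ᵥ y) ≤ projDist x y := by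
  refine projDist_le_log_div (iInf_div_pos hx hy) hMy (fun i => ?_) (fun i => ?_)
  · have := mulVec_le_mulVec hM (x := (⨅ j, x j / y j) • y) (iInf_div_mul_le hy) i
    rwa [mulVec_smul] at this
  · have := mulVec_le_mulVec hM (y := (⨆ j, x j / y j) • y) (le_iSup_div_mul hy) i
    rwa [mulVec_smul] at this

end NonnegMatrix

section BirkhoffContraction

variable {N : ℕ} {A : Matrix (Fin N) (Fin N) ℝ}

theorem birkGamma_le_sqrt (hA : ∀ i j, 0 < A i j) (i j k l : Fin N) :
    birkGamma A ≤ √(A i j * A k l / (A i l * A k j)) := by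
  rw [birkGamma, if_pos hA]
  exact (ciInf_le (Finite.bddBelow_range _) i).trans <|
    (ciInf_le (Finite.bddBelow_range _) j).trans <|
    (ciInf_le (Finite.bddBelow_range _) k).trans (ciInf_le (Finite.bddBelow_range _) l)

variable [Nonempty (Fin N)]

theorem birkGamma_pos (hA : ∀ i j, 0 < A i j) : 0 < birkGamma A := by
  rw [birkGamma, if_pos hA]
  refine lt_ciInf_of_finite fun i => lt_ciInf_of_finite fun j => lt_ciInf_of_finite fun k =>
    lt_ciInf_of_finite fun l => Real.sqrt_pos.2 ?_
  exact div_pos (mul_pos (hA i j) (hA k l)) (mul_pos (hA i l) (hA k j))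

theorem birkGamma_le_one (hA : ∀ i j, 0 < A i j) : birkGamma A ≤ 1 := by
  obtain ⟨i⟩ := ‹Nonempty (Fin N)›
  simpa [(hA i i).ne'] using birkGamma_le_sqrt hA i i i i

theorem birkGamma_sq_mul_le (hA : ∀ i j, 0 < A i j) (i j k l : Fin N) :
    birkGamma A ^ 2 * (A i j * A k l) ≤ A i l * A k j := by
  have h := (Real.le_sqrt' (birkGamma_pos hA)).1 (birkGamma_le_sqrt hA i l k j)
  rwa [le_div_iff₀ (mul_pos (hA i j) (hA k l))] at h

theorem birkTau_nonneg (hA : ∀ i j, 0 < A i j) : 0 ≤ birkTau A :=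
  div_nonneg (by linarith [birkGamma_le_one hA]) (by linarith [birkGamma_pos hA])

theorem birkTau_lt_one (hA : ∀ i j, 0 < A i j) : birkTau A < 1 :=
  (div_lt_one (by linarith [birkGamma_pos hA])).2 (by linarith [birkGamma_pos hA])

theorem projDist_mulVec_le_birkTau_mul (hA : ∀ i j, 0 < A i j) {y z : Fin N → ℝ}
    (hy : ∀ i, 0 < y i) (hz : ∀ i, 0 < z i) :
    projDist (A *ᵥ y) (A *ᵥ z) ≤ birkTau A * projDist y z := by
  set α := ⨅ j, y j / z j
  set β := ⨆ j, y j / z j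
  have hα : 0 < α := iInf_div_pos hy hz
  have hβα : 0 < β / α := div_pos (hα.trans_le iInf_div_le_iSup_div) hα
  have hrow : ∀ i, ∃ j, 0 < A i j := fun i => ⟨i, hA i i⟩
  have hAy : ∀ i, ∑ j, A i j * z j * (y j / z j) = (A *ᵥ y) i := fun i =>
    Finset.sum_congr rfl fun j _ => by field_simp [(hz j).ne']
  have hcross : ∀ i k, (A *ᵥ y) i * (A *ᵥ z) k ≤
      (β / α) ^ ((1 - birkGamma A) / (1 + birkGamma A)) * ((A *ᵥ z) i * (A *ᵥ y) k) := by
    intro i k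
    rw [← hAy, ← hAy]
    refine sum_mul_mul_sum_le hα iInf_div_le_iSup_div (birkGamma_pos hA) (birkGamma_le_one hA)
      (fun j => (mul_pos (hA i j) (hz j)).le) (fun j => (mul_pos (hA k j) (hz j)).le)
      (fun j => ⟨ciInf_le (Finite.bddBelow_range _) j, le_ciSup (Finite.bddAbove_range fun j => y j / z j) j⟩)
      fun j j' => ?_
    calc birkGamma A ^ 2 * (A i j * z j * (A k j' * z j'))
        = birkGamma A ^ 2 * (A i j * A k j') * (z j * z j') := by ring
      _ ≤ A i j' * A k j * (z j * z j') :=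
          mul_le_mul_of_nonneg_right (birkGamma_sq_mul_le hA i j k j')
            (mul_nonneg (hz j).le (hz j').le)
      _ = A i j' * z j' * (A k j * z j) := by ring
  calc projDist (A *ᵥ y) (A *ᵥ z)
      ≤ Real.log ((β / α) ^ ((1 - birkGamma A) / (1 + birkGamma A))) :=
        projDist_le_log_of_mul_le (Real.rpow_pos_of_pos hβα _) (mulVec_pos (fun i j => (hA i j).le) hrow hy)
          (mulVec_pos (fun i j => (hA i j).le) hrow hz) hcross
    _ = birkTau A * projDist y z := Real.log_rpow hβα _

end BirkhoffContraction

section NormalizedAction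

variable {N : ℕ} {M : Matrix (Fin N) (Fin N) ℝ} {x y : Fin N → ℝ}

theorem FM_eq_smul (M : Matrix (Fin N) (Fin N) ℝ) (x : Fin N → ℝ) :
    FM M x = (∑ j, (M *ᵥ x) j)⁻¹ • (M *ᵥ x) := by
  funext i
  exact div_eq_inv_mul _ _

theorem FM_smul {c : ℝ} (hc : c ≠ 0) : FM M (c • x) = FM M x := by
  ext i
  simp only [FM, mulVec_smul, Pi.smul_apply, smul_eq_mul, ← Finset.mul_sum,
    mul_div_mul_left _ _ hc]

theorem FM_mulVec (A : Matrix (Fin N) (Fin N) ℝ) : FM M (A *ᵥ x) = FM (M * A) x := by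
  unfold FM
  rw [mulVec_mulVec]

theorem FM_eq_self_of_mulVec_eq_smul {v : Fin N → ℝ} {ρ : ℝ} (hρ : ρ ≠ 0)
    (hv : ∑ i, v i = 1) (heig : M *ᵥ v = ρ • v) : FM M v = v := by
  ext i
  simp [FM, heig, ← Finset.mul_sum, hv, hρ]

variable [Nonempty (Fin N)]

theorem sum_pos_of_pos (hx : ∀ i, 0 < x i) : 0 < ∑ i, x i :=
  Finset.sum_pos (fun i _ => hx i) Finset.univ_nonempty

theorem FM_pos (hM : ∀ i j, 0 ≤ M i j) (hrow : ∀ i, ∃ j, 0 < M i j) (hx : ∀ i, 0 < x i)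
    (i : Fin N) : 0 < FM M x i :=
  div_pos (mulVec_pos hM hrow hx i) (sum_pos_of_pos (mulVec_pos hM hrow hx))

theorem iterate_FM_eq_FM_pow (hM : ∀ i j, 0 ≤ M i j) (hrow : ∀ i, ∃ j, 0 < M i j)
    (hx : ∀ i, 0 < x i) {n : ℕ} (hn : n ≠ 0) : (FM M)^[n] x = FM (M ^ n) x := by
  obtain ⟨n, rfl⟩ := Nat.exists_eq_add_one_of_ne_zero hn
  induction n with
  | zero => simp
  | succ n ih =>
    rw [Function.iterate_succ_apply', ih n.succ_ne_zero, FM_eq_smul (M ^ (n + 1)),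
      FM_smul (inv_pos.2 (sum_pos_of_pos (pow_mulVec_pos hM hrow hx _))).ne', FM_mulVec,
      ← pow_succ']

theorem projDist_FM_FM (hMx : ∀ i, 0 < (M *ᵥ x) i) (hMy : ∀ i, 0 < (M *ᵥ y) i) :
    projDist (FM M x) (FM M y) = projDist (M *ᵥ x) (M *ᵥ y) := by
  rw [FM_eq_smul, FM_eq_smul]
  exact projDist_smul_smul (inv_pos.2 (sum_pos_of_pos hMx)) (inv_pos.2 (sum_pos_of_pos hMy))

theorem projDist_FM_le (hM : ∀ i j, 0 ≤ M i j) (hrow : ∀ i, ∃ j, 0 < M i j)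
    (hx : ∀ i, 0 < x i) (hy : ∀ i, 0 < y i) : projDist (FM M x) (FM M y) ≤ projDist x y := by
  rw [projDist_FM_FM (mulVec_pos hM hrow hx) (mulVec_pos hM hrow hy)]
  exact projDist_mulVec_le hM (mulVec_pos hM hrow hy) hx hy

theorem projDist_iterate_FM_le (hM : ∀ i j, 0 ≤ M i j) {ℓ : ℕ} (hℓ : 0 < ℓ)
    (hpow : ∀ i j, 0 < (M ^ ℓ) i j) (hx : ∀ i, 0 < x i) (hy : ∀ i, 0 < y i) :
    projDist ((FM M)^[ℓ] x) ((FM M)^[ℓ] y) ≤ birkTau (M ^ ℓ) * projDist x y := by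
  have hrow := exists_pos_of_pow_pos hM hℓ hpow
  have hrowℓ : ∀ i, ∃ j, 0 < (M ^ ℓ) i j := fun i => ⟨i, hpow i i⟩
  have hMℓ : ∀ i j, 0 ≤ (M ^ ℓ) i j := fun i j => (hpow i j).le
  rw [iterate_FM_eq_FM_pow hM hrow hx hℓ.ne', iterate_FM_eq_FM_pow hM hrow hy hℓ.ne',
    projDist_FM_FM (mulVec_pos hMℓ hrowℓ hx) (mulVec_pos hMℓ hrowℓ hy)]
  exact projDist_mulVec_le_birkTau_mul hpow hx hy

end NormalizedAction

/-- contraction of the normalized iterates of a primitive matrix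
towards its Perron eigenvector, in the projective distance:
`d(F_M^m x, v_M) ≤ (τ^{⌊m/ℓ⌋}/(1−τ))·d_M(x)`. -/
theorem projective_convergence_to_perron_vector
    {N : ℕ} (hN : 0 < N) (M : Matrix (Fin N) (Fin N) ℝ)
    (hMnn : ∀ i j, 0 ≤ M i j) (ℓ : ℕ) (hprim : PrimIndex M ℓ)
    (ρ : ℝ) (hρ : 0 < ρ) (v : Fin N → ℝ) (hv : v ∈ simplex N)
    (heig : M.mulVec v = ρ • v)
    (x : Fin N → ℝ) (hx : x ∈ simplex N) (m : ℕ) :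
    projDist ((FM M)^[m] x) v ≤
      birkTau (M ^ ℓ) ^ (m / ℓ) / (1 - birkTau (M ^ ℓ)) * dMin M ℓ x := by
  obtain ⟨hℓ, hpow, -⟩ := hprim
  have : Nonempty (Fin N) := ⟨⟨0, hN⟩⟩
  have hrow := exists_pos_of_pow_pos hMnn hℓ hpow
  let S : Set (Fin N → ℝ) := {y | ∀ i, 0 < y i}
  have hF : Set.MapsTo (FM M) S S := fun y hy => FM_pos hMnn hrow hy
  have htri : ∀ x ∈ S, ∀ y ∈ S, ∀ z ∈ S, projDist x z ≤ projDist x y + projDist y z :=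
    fun x hx y hy z hz => projDist_triangle hx hy hz
  have hlip : ∀ x ∈ S, ∀ y ∈ S, projDist (FM M x) (FM M y) ≤ projDist x y :=
    fun x hx y hy => projDist_FM_le hMnn hrow hx hy
  rw [dMin, min_eq_right (dist_self_iterate_le_mul hF htri hlip (fun y hy => projDist_self hy)
    hx.1 ℓ)]
  exact dist_iterate_le_of_contracting_iterate hF htri hlip (birkTau_nonneg hpow)
    (birkTau_lt_one hpow) (fun x hx y hy => projDist_iterate_FM_le hMnn hℓ hpow hx hy) hv.1
    (FM_eq_self_of_mulVec_eq_smul hρ.ne' hv.2 heig) hx.1 m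

end PerronApprox
end

section
/- Let A be a finite alphabet, X ⊆ A^ℕ a subshift which is specified with specification length ℓ, and φ : A^ℕ → ℝ Hölder continuous. Then for all integers n ≥ m, every entry of the (ℓ+n+1)-st power of the transfer matrix M_{(m,n)} is strictly positive; in particular M_{(m,n)} is a primitive matrix. -/
open MeasureTheory Filter
open scoped BigOperators ENNReal

namespace GibbsApprox

variable {A : Type} [Fintype A] [DecidableEq A] [Nonempty A]
  [TopologicalSpace A] [DiscreteTopology A] [MeasurableSpace A]

/-- The shift map on `ℕ → A`. -/
def shift (a : ℕ → A) : ℕ → A := fun i => a (i + 1)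

/-- The word `a(0:n)` of length `n+1`. -/
def word0 (a : ℕ → A) (n : ℕ) : Fin (n + 1) → A := fun i => a i

/-- Cylinder set determined by a word of length `n+1`. -/
def cylW {n : ℕ} (w : Fin (n + 1) → A) : Set (ℕ → A) :=
  {b | ∀ i : Fin (n + 1), b i = w i}

/-- `X`-admissible words of length `n+1`. -/
def lang (X : Set (ℕ → A)) (n : ℕ) : Set (Fin (n + 1) → A) :=
  {w | ∃ a ∈ X, word0 a n = w}

/-- A subshift: a closed shift-invariant subset of `ℕ → A`. -/
def IsSubshift (X : Set (ℕ → A)) : Prop :=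
  IsClosed X ∧ ∀ a ∈ X, shift a ∈ X

/-- Periodic points of period `p` in `X`. -/
def per (X : Set (ℕ → A)) (p : ℕ) : Set (ℕ → A) :=
  {a | a ∈ X ∧ shift^[p] a = a}

/-- Specification with specification length `ℓ`. -/
def Specified (X : Set (ℕ → A)) (ℓ : ℕ) : Prop :=
  ∀ (m n : ℕ) (u : Fin (m + 1) → A) (v : Fin (n + 1) → A),
    u ∈ lang X m → v ∈ lang X n → ∀ k, ℓ ≤ k →
      ∃ c ∈ per X (m + n + k + 2),
        (∀ i : Fin (m + 1), c i = u i) ∧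
        (∀ j : Fin (n + 1), c (m + k + 1 + (j : ℕ)) = v j)

/-- A finite word (as a `List`) is in the language of `X`. -/
def inLang (X : Set (ℕ → A)) (w : List A) : Prop :=
  ∃ a ∈ X, ∀ i : Fin w.length, a (i : ℕ) = w.get i

/-- Follower set of a word. -/
def follower (X : Set (ℕ → A)) (w : List A) : Set (List A) :=
  {u | inLang X (w ++ u)}

/-- Soficity: finitely many follower sets. -/
def IsSofic (X : Set (ℕ → A)) : Prop :=
  Set.Finite {S : Set (List A) | ∃ w : List A, inLang X w ∧ S = follower X w}

/-- Hölder continuity of a potential with constant `C` and exponent `θ`. -/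
def HolderPot (φ : (ℕ → A) → ℝ) (C θ : ℝ) : Prop :=
  ∀ (n : ℕ) (a b : ℕ → A), (∀ i, i ≤ n → a i = b i) → |φ a - φ b| ≤ C * θ ^ n

/-- Birkhoff sum `S_k φ = ∑_{i=0}^k φ ∘ T^i`. -/
noncomputable def birkhoff (φ : (ℕ → A) → ℝ) (k : ℕ) (a : ℕ → A) : ℝ :=
  ∑ i ∈ Finset.range (k + 1), φ (shift^[i] a)

/-- The finite type approximation of order `m` of `X`. -/
def FTA (X : Set (ℕ → A)) (m : ℕ) : Set (ℕ → A) :=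
  {a | ∀ j : ℕ, (fun i : Fin (m + 1) => a (j + (i : ℕ))) ∈ lang X m}

/-- The distance `D` metrizing the weak topology. -/
noncomputable def wdist (μ ν : Measure (ℕ → A)) : ℝ :=
  ∑' n : ℕ, (2 : ℝ)⁻¹ ^ (n + 1) *
    ∑ w : Fin (n + 1) → A, |(μ (cylW w)).toReal - (ν (cylW w)).toReal|

/-- `μ` is a Gibbs measure for `φ` on the subshift `Y`, with pressure `P` and
constant `C₀`. -/
structure IsGibbs (φ : (ℕ → A) → ℝ) (Y : Set (ℕ → A)) (μ : Measure (ℕ → A))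
    (P C₀ : ℝ) : Prop where
  prob : IsProbabilityMeasure μ
  invariant : μ.map shift = μ
  supp : μ Yᶜ = 0
  posC : 0 < C₀
  lower : ∀ a ∈ Y, ∀ k : ℕ,
    C₀⁻¹ ≤ (μ (cylW (word0 a k))).toReal / Real.exp (birkhoff φ k a - (k + 1) * P)
  upper : ∀ a ∈ Y, ∀ k : ℕ,
    (μ (cylW (word0 a k))).toReal / Real.exp (birkhoff φ k a - (k + 1) * P) ≤ C₀

/-- The periodic extension of a word of length `p+1`. -/
def perExt {p : ℕ} (u : Fin (p + 1) → A) : ℕ → A :=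
  fun i => u ⟨i % (p + 1), Nat.mod_lt i (Nat.succ_pos p)⟩

open Classical in
/-- Words of length `p+1` whose periodic extension lies in `Y`; these
parametrize `per_{p+1}(Y)`. -/
noncomputable def perWords (Y : Set (ℕ → A)) (p : ℕ) : Finset (Fin (p + 1) → A) :=
  Finset.univ.filter (fun u => perExt u ∈ Y)

/-- Normalizing constant of the elementary Gibbs measure. -/
noncomputable def elemZ (φ : (ℕ → A) → ℝ) (Y : Set (ℕ → A)) (p : ℕ) : ℝ :=
  ∑ u ∈ perWords Y p, Real.exp (birkhoff φ p (perExt u))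

/-- The elementary Gibbs measure `E_{(m,p)}` (here on a general subshift `Y`,
apply with `Y = FTA X m`): atomic on `per_{p+1}(Y)` with weights
proportional to `exp (S_p φ)`. -/
noncomputable def elemGibbs (φ : (ℕ → A) → ℝ) (Y : Set (ℕ → A)) (p : ℕ) :
    Measure (ℕ → A) :=
  ∑ u ∈ perWords Y p,
    ENNReal.ofReal (Real.exp (birkhoff φ p (perExt u)) / elemZ φ Y p) •
      Measure.dirac (perExt u)

/-- `∑_{a ∈ per_{k+1}(Y)} exp (S_k φ (a))`. -/
noncomputable def pressureSum (φ : (ℕ → A) → ℝ) (Y : Set (ℕ → A)) (k : ℕ) : ℝ :=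
  ∑ u ∈ perWords Y k, Real.exp (birkhoff φ k (perExt u))

/-- `P` is the topological pressure of `φ` on `Y`. -/
def HasPressure (φ : (ℕ → A) → ℝ) (Y : Set (ℕ → A)) (P : ℝ) : Prop :=
  Tendsto (fun k : ℕ => Real.log (pressureSum φ Y k) / (k + 1)) atTop (nhds P)

/-- `φ^n(w) = max {φ(b) : b ∈ [w]}`. -/
noncomputable def potWord (φ : (ℕ → A) → ℝ) {n : ℕ} (w : Fin (n + 1) → A) : ℝ :=
  sSup (φ '' cylW w)

/-- The word `w · x` of length `n+2`. -/
def extWord {n : ℕ} (w : Fin (n + 1) → A) (x : A) : Fin (n + 2) → A :=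
  fun i => if h : (i : ℕ) < n + 1 then w ⟨i, h⟩ else x

open Classical in
/-- The admissible words of length `n+1` of `Y`, as a `Finset`. -/
noncomputable def langFinset (Y : Set (ℕ → A)) (n : ℕ) : Finset (Fin (n + 1) → A) :=
  Finset.univ.filter (fun w => w ∈ lang Y n)

open Classical in
/-- The transfer matrix `M_{(m,n)}`, indexed by `L_{(m,n)} = L_n(X_m)`. -/
noncomputable def transferM (φ : (ℕ → A) → ℝ) (X : Set (ℕ → A)) (m n : ℕ) :
    Matrix {w // w ∈ langFinset (FTA X m) n} {w // w ∈ langFinset (FTA X m) n} ℝ :=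
  fun a b =>
    if ∀ i : Fin n, (a : Fin (n + 1) → A) i.succ = (b : Fin (n + 1) → A) i.castSucc
    then Real.exp (potWord φ
      (extWord (a : Fin (n + 1) → A) ((b : Fin (n + 1) → A) (Fin.last n))))
    else 0

/-- `n`-th term of the sequence defining the measure-theoretic entropy. -/
noncomputable def entropySum (ν : Measure (ℕ → A)) (n : ℕ) : ℝ :=
  -(∑ w : Fin (n + 1) → A,
      (ν (cylW w)).toReal * Real.log (ν (cylW w)).toReal) / (n + 1)

/-- The measure-theoretic entropy of `ν` is `h`. -/
def HasEntropy (ν : Measure (ℕ → A)) (h : ℝ) : Prop :=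
  Tendsto (fun n => entropySum ν n) atTop (nhds h)

/-- `n`-th term of the sequence defining the relative entropy `h(ν|μ)`. -/
noncomputable def relEntropySum (ν μ : Measure (ℕ → A)) (n : ℕ) : ℝ :=
  (∑ w : Fin (n + 1) → A,
      (ν (cylW w)).toReal *
        Real.log ((ν (cylW w)).toReal / (μ (cylW w)).toReal)) / (n + 1)

/-- The relative entropy of `ν` with respect to `μ` is `h`. -/
def HasRelEntropy (ν μ : Measure (ℕ → A)) (h : ℝ) : Prop :=
  Tendsto (fun n => relEntropySum ν μ n) atTop (nhds h)

/-- `Φ(w) = max {S_n φ (b) : b ∈ [w]}` for a word `w` of length `n+1`. -/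
noncomputable def birkWord (φ : (ℕ → A) → ℝ) {n : ℕ} (w : Fin (n + 1) → A) : ℝ :=
  sSup (birkhoff φ n '' cylW w)

open Classical in
/-- The metric `d(a,b) = exp (−min {n : a n ≠ b n})` on `A^ℕ`. -/
noncomputable def seqDist (a b : ℕ → A) : ℝ :=
  if a = b then 0 else Real.exp (-((sInf {n : ℕ | a n ≠ b n} : ℕ) : ℝ))

/-- Hausdorff distance between two subsets of `A^ℕ`, for the metric `seqDist`. -/
noncomputable def hausd (S T : Set (ℕ → A)) : ℝ :=
  max (⨆ a : S, ⨅ b : T, seqDist (a : ℕ → A) b)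
      (⨆ b : T, ⨅ a : S, seqDist (a : ℕ → A) b)


end GibbsApprox

/-!
Let `a, b` be words of length `n + 1` of `X_m`, realized by points `y, z ∈ X_m`. Specification
yields a point `c ∈ X` that starts with the last `m + 1` letters of `a` and shows the first
`m + 1` letters of `b` after a gap of `ℓ` letters. Since membership in `X_m` only tests windows
of length `m + 1`, splicing `y`, `c` and `z` along overlaps of `m` letters gives a point of `X_m`
reading `a` at time `0` and `b` at time `ℓ + n + 1`. Consecutive `(n + 1)`-windows along its
orbit are linked by positive entries of `M_{(m,n)}`, so the path they form makes the
`(a, b)`-entry of `M_{(m,n)} ^ (ℓ + n + 1)` positive.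
-/

theorem Matrix.pow_apply_pos_of_chain {ι R : Type*} [Fintype ι] [DecidableEq ι] [Semiring R]
    [PartialOrder R] [IsStrictOrderedRing R] {M : Matrix ι ι R} (hM : ∀ i j, 0 ≤ M i j)
    (w : ℕ → ι) (L : ℕ) (hw : ∀ k < L, 0 < M (w k) (w (k + 1))) : 0 < (M ^ L) (w 0) (w L) := by
  induction L with
  | zero => simp
  | succ L ih =>
    rw [pow_succ, Matrix.mul_apply]
    exact Finset.sum_pos' (fun k _ => mul_nonneg (Matrix.pow_apply_nonneg hM L _ _) (hM _ _))
      ⟨w L, Finset.mem_univ _, mul_pos (ih fun k hk => hw k (by omega)) (hw L (by omega))⟩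

namespace GibbsApprox

variable {A : Type}

theorem shift_iterate_apply (t : ℕ) (a : ℕ → A) (i : ℕ) : (shift^[t] a) i = a (t + i) := by
  induction t generalizing a with
  | zero => simp
  | succ t ih =>
    rw [Function.iterate_succ_apply, ih]
    simp only [shift]
    congr 1
    omega

theorem word0_mem_lang {X : Set (ℕ → A)} {a : ℕ → A} (ha : a ∈ X) (n : ℕ) :
    word0 a n ∈ lang X n :=
  ⟨a, ha, rfl⟩

theorem mem_langFinset [Fintype A] {Y : Set (ℕ → A)} {n : ℕ} {w : Fin (n + 1) → A} :
    w ∈ langFinset Y n ↔ w ∈ lang Y n := by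
  classical
  simp [langFinset]

theorem mem_FTA_iff {X : Set (ℕ → A)} {m : ℕ} {a : ℕ → A} :
    a ∈ FTA X m ↔ ∀ j, word0 (shift^[j] a) m ∈ lang X m := by
  refine forall_congr' fun j => ?_
  rw [show word0 (shift^[j] a) m = fun i : Fin (m + 1) => a (j + i) from
    funext fun i => shift_iterate_apply j a i]

theorem subset_FTA {X : Set (ℕ → A)} (hX : Set.MapsTo shift X X) (m : ℕ) : X ⊆ FTA X m :=
  fun _ ha => mem_FTA_iff.2 fun j => word0_mem_lang (hX.iterate j ha) m

theorem mapsTo_shift_FTA (X : Set (ℕ → A)) (m : ℕ) : Set.MapsTo shift (FTA X m) (FTA X m) := by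
  intro a ha
  simpa only [mem_FTA_iff, ← Function.iterate_succ_apply] using fun j => mem_FTA_iff.1 ha (j + 1)

def splice (y z : ℕ → A) (s : ℕ) : ℕ → A := fun i => if i < s then y i else z (i - s)

theorem splice_of_lt {y z : ℕ → A} {s i : ℕ} (hi : i < s) : splice y z s i = y i :=
  if_pos hi

theorem splice_add (y z : ℕ → A) (s i : ℕ) : splice y z s (s + i) = z i := by
  simp [splice]

theorem shift_iterate_splice (y z : ℕ → A) (s : ℕ) : shift^[s] (splice y z s) = z :=
  funext fun i => by rw [shift_iterate_apply, splice_add]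

theorem splice_mem_FTA {X : Set (ℕ → A)} {m : ℕ} {y z : ℕ → A} (hy : y ∈ FTA X m)
    (hz : z ∈ FTA X m) {s : ℕ} (hyz : ∀ i < m, y (s + i) = z i) :
    splice y z s ∈ FTA X m := by
  intro j
  by_cases hj : j < s
  · convert hy j using 2 with i
    by_cases hji : j + i < s
    · exact splice_of_lt hji
    · obtain ⟨k, hk⟩ := Nat.exists_eq_add_of_le (not_lt.1 hji)
      rw [hk, splice_add, hyz k (by omega)]
  · convert hz (j - s) using 2 with i
    rw [show j + i = s + (j - s + i) by omega, splice_add]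

theorem exists_mem_FTA_connecting {X : Set (ℕ → A)} {ℓ m n : ℕ} (hX : Set.MapsTo shift X X)
    (hspec : Specified X ℓ) (hmn : m ≤ n) {a b : Fin (n + 1) → A} (ha : a ∈ lang (FTA X m) n)
    (hb : b ∈ lang (FTA X m) n) :
    ∃ x ∈ FTA X m, word0 x n = a ∧ word0 (shift^[ℓ + n + 1] x) n = b := by
  obtain ⟨q, rfl⟩ := Nat.exists_eq_add_of_le hmn
  obtain ⟨y, hy, rfl⟩ := ha
  obtain ⟨z, hz, rfl⟩ := hb
  obtain ⟨c, hc, hcy, hcz⟩ := hspec m m _ _ (hy q) (hz 0) ℓ le_rfl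
  set y' := splice y c q
  have hy'_eq : ∀ i ≤ m + q, y' i = y i := by
    intro i hi
    by_cases hiq : i < q
    · exact splice_of_lt hiq
    · obtain ⟨k, rfl⟩ := Nat.exists_eq_add_of_le (not_lt.1 hiq)
      exact (splice_add y c q k).trans (hcy ⟨k, by omega⟩)
  have hy' : y' ∈ FTA X m :=
    splice_mem_FTA hy (subset_FTA hX m hc.1) fun i hi => (hcy ⟨i, by omega⟩).symm
  refine ⟨splice y' z (ℓ + (m + q) + 1), splice_mem_FTA hy' hz fun i hi => ?_, ?_, ?_⟩
  · have := hcz ⟨i, by omega⟩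
    simp only [zero_add] at this
    rw [show ℓ + (m + q) + 1 + i = q + (m + ℓ + 1 + i) by omega]
    exact (splice_add y c q _).trans this
  · funext i
    exact (splice_of_lt (by omega)).trans (hy'_eq i (by omega))
  · rw [shift_iterate_splice]

section TransferMatrix

variable [Fintype A] [DecidableEq A] (φ : (ℕ → A) → ℝ) (X : Set (ℕ → A)) (m n : ℕ)

theorem transferM_nonneg (a b : langFinset (FTA X m) n) : 0 ≤ transferM φ X m n a b := by
  unfold transferM
  split
  · exact (Real.exp_pos _).le
  · exact le_rfl

theorem transferM_pos {a b : langFinset (FTA X m) n}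
    (hab : ∀ i : Fin n, a.1 i.succ = b.1 i.castSucc) : 0 < transferM φ X m n a b := by
  unfold transferM
  rw [if_pos hab]
  exact Real.exp_pos _

theorem transferM_pow_pos_of_mem_FTA {x : ℕ → A} (hx : x ∈ FTA X m) (L : ℕ)
    {a b : langFinset (FTA X m) n} (ha : a.1 = word0 x n)
    (hb : b.1 = word0 (shift^[L] x) n) : 0 < (transferM φ X m n ^ L) a b := by
  let w : ℕ → langFinset (FTA X m) n := fun k =>
    ⟨word0 (shift^[k] x) n,
      mem_langFinset.2 (word0_mem_lang ((mapsTo_shift_FTA X m).iterate k hx) n)⟩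
  obtain rfl : a = w 0 := Subtype.ext ha
  obtain rfl : b = w L := Subtype.ext hb
  refine Matrix.pow_apply_pos_of_chain (transferM_nonneg φ X m n) w L
    fun k _ => transferM_pos φ X m n fun i => ?_
  simp only [w, word0, shift_iterate_apply, Fin.val_succ, Fin.val_castSucc]
  congr 1
  omega

end TransferMatrix

variable [Fintype A] [DecidableEq A] [Nonempty A] [TopologicalSpace A] [DiscreteTopology A]
  [MeasurableSpace A]

theorem transfer_matrix_primitive_general
    (X : Set (ℕ → A)) (hX : IsSubshift X)
    (ℓ : ℕ) (hspec : Specified X ℓ)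
    (φ : (ℕ → A) → ℝ) :
    ∀ m n : ℕ, m ≤ n →
      (∀ a b, 0 < ((transferM φ X m n) ^ (ℓ + n + 1)) a b) ∧
      ∃ k : ℕ, 0 < k ∧ ∀ a b, 0 < ((transferM φ X m n) ^ k) a b := by
  intro m n hmn
  have hpos : ∀ a b, 0 < ((transferM φ X m n) ^ (ℓ + n + 1)) a b := by
    intro a b
    obtain ⟨x, hx, hxa, hxb⟩ := exists_mem_FTA_connecting (fun _ h => hX.2 _ h) hspec hmn
      (mem_langFinset.1 a.2) (mem_langFinset.1 b.2)
    exact transferM_pow_pos_of_mem_FTA φ X m n hx _ hxa.symm hxb.symm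
  exact ⟨hpos, ℓ + n + 1, Nat.succ_pos _, hpos⟩

/-- for a specified subshift with specification length `ℓ`, every
entry of the `(ℓ+n+1)`-st power of the transfer matrix `M_{(m,n)}` is strictly
positive; in particular `M_{(m,n)}` is primitive. -/
theorem transfer_matrix_primitive
    (X : Set (ℕ → A)) (hX : IsSubshift X)
    (ℓ : ℕ) (hspec : Specified X ℓ)
    (φ : (ℕ → A) → ℝ) (C θ : ℝ) (hC : 0 < C) (hθ : θ ∈ Set.Ioo (0 : ℝ) 1)
    (hH : HolderPot φ C θ) :
    ∀ m n : ℕ, m ≤ n →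
      (∀ a b, 0 < ((transferM φ X m n) ^ (ℓ + n + 1)) a b) ∧
      ∃ k : ℕ, 0 < k ∧ ∀ a b, 0 < ((transferM φ X m n) ^ k) a b :=
  transfer_matrix_primitive_general X hX ℓ hspec φ

end GibbsApprox
end

section
/- Let A be a finite alphabet, X ⊆ A^ℕ a sofic subshift which is specified with specification length ℓ ≥ 1, and φ : A^ℕ → ℝ Hölder continuous with constant C > 0 and exponent θ ∈ (0,1). For a word w of length n+1 set Φ(w) := max{S_nφ(b) : b ∈ A^ℕ, b(0:n) = w}, and let ∂L_m := L_{m+1}(X_m) \ L_{m+1}(X) be the set of words of length m+2 all of whose subwords of length m+1 are X-admissible but which are not themselves X-admissible. Then there exist θ₀ ∈ (0,1) and m₀ ∈ ℕ such that for all m ≥ m₀: Σ_{w ∈ ∂L_m} exp(Φ(w)) ≤ θ₀^m · Σ_{w ∈ L_{m+1}(X_m)} exp(Φ(w)). -/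
open MeasureTheory Filter
open scoped BigOperators ENNReal

namespace GibbsApprox

variable {A : Type} [Fintype A] [DecidableEq A] [Nonempty A]
  [TopologicalSpace A] [DiscreteTopology A] [MeasurableSpace A]

/-! ### Auxiliary development for Statement 17 -/

section Aux17
set_option linter.unusedSectionVars false
set_option linter.unusedVariables false

noncomputable def wdef : A := Classical.arbitrary A

/-- The word `z(0:n-1)` of a sequence. -/
def wrdN (z : ℕ → A) (n : ℕ) : Fin n → A := fun i => z i.1

/-- Segment of a word. -/
def wseg {n : ℕ} (w : Fin n → A) (p q : ℕ) (h : p + q ≤ n) : Fin q → A :=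
  fun i => w ⟨p + i.1, by have := i.2; omega⟩

lemma wapp {n : ℕ} (w : Fin n → A) {i j : ℕ} (hi : i < n) (hj : j < n) (hij : i = j) :
    w ⟨i, hi⟩ = w ⟨j, hj⟩ := by subst hij; rfl

/-- Extension of a word by junk. -/
noncomputable def wext {n : ℕ} (w : Fin n → A) : ℕ → A :=
  fun i => if h : i < n then w ⟨i, h⟩ else wdef

/-- Cylinder of a word of length `n`. -/
def cylN (n : ℕ) (w : Fin n → A) : Set (ℕ → A) :=
  {b | ∀ i, ∀ h : i < n, b i = w ⟨i, h⟩}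

/-- Birkhoff sum over `n` terms. -/
noncomputable def birkN (φ : (ℕ → A) → ℝ) (n : ℕ) (a : ℕ → A) : ℝ :=
  ∑ i ∈ Finset.range n, φ (shift^[i] a)

/-- Supremum of the Birkhoff sum over a cylinder. -/
noncomputable def PhiN (φ : (ℕ → A) → ℝ) (n : ℕ) (w : Fin n → A) : ℝ :=
  sSup (birkN φ n '' cylN n w)

/-- Admissibility of a word of length `n`. -/
def wmemN (X : Set (ℕ → A)) {n : ℕ} (w : Fin n → A) : Prop :=
  ∃ a ∈ X, ∀ i, ∀ h : i < n, a i = w ⟨i, h⟩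

open Classical in
/-- Partition function over admissible words of length `n`. -/
noncomputable def Zs (X : Set (ℕ → A)) (φ : (ℕ → A) → ℝ) (n : ℕ) : ℝ :=
  ∑ w : Fin n → A, if wmemN X w then Real.exp (PhiN φ n w) else 0

/-- Occurrence of the word `ω` at position `i` of the sequence `z`. -/
def occW (ω : List A) (z : ℕ → A) (i : ℕ) : Prop :=
  ∀ j, ∀ hj : j < ω.length, z (i + j) = ω.get ⟨j, hj⟩

/-- `w` has no occurrence of `ω`. -/
noncomputable def ofree (ω : List A) {n : ℕ} (w : Fin n → A) : Prop :=
  ∀ i, i + ω.length ≤ n → ¬ occW ω (wext w) i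

open Classical in
/-- Partition function over admissible `ω`-free words of length `n`. -/
noncomputable def Ys (X : Set (ℕ → A)) (φ : (ℕ → A) → ℝ) (ω : List A) (n : ℕ) : ℝ :=
  ∑ w : Fin n → A, if wmemN X w ∧ ofree ω w then Real.exp (PhiN φ n w) else 0

lemma wext_lt {n : ℕ} (w : Fin n → A) {i : ℕ} (h : i < n) : wext w i = w ⟨i, h⟩ := by
  simp [wext, h]

lemma wext_mem_cyl {n : ℕ} (w : Fin n → A) : wext w ∈ cylN n w := fun i h => wext_lt w h

lemma cylN_nonempty {n : ℕ} (w : Fin n → A) : (cylN n w).Nonempty := ⟨wext w, wext_mem_cyl w⟩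

lemma shift_iter_apply (a : ℕ → A) (p i : ℕ) : shift^[p] a i = a (i + p) := by
  induction p generalizing a with
  | zero => rfl
  | succ p ih =>
      rw [Function.iterate_succ_apply, ih (shift a)]
      show a (i + p + 1) = a (i + (p+1))
      exact congrArg a (by omega)

lemma shift_iter_mem {X : Set (ℕ → A)} (hX : IsSubshift X) (p : ℕ) {a : ℕ → A} (ha : a ∈ X) :
    shift^[p] a ∈ X := by
  induction p with
  | zero => exact ha
  | succ p ih => rw [Function.iterate_succ_apply']; exact hX.2 _ ih

lemma birkN_add (φ : (ℕ → A) → ℝ) (p q : ℕ) (a : ℕ → A) :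
    birkN φ (p + q) a = birkN φ p a + birkN φ q (shift^[p] a) := by
  unfold birkN
  have h1 : ∑ i ∈ Finset.range (p+q), φ (shift^[i] a)
      = ∑ i ∈ Finset.Ico 0 p, φ (shift^[i] a) + ∑ i ∈ Finset.Ico p (p+q), φ (shift^[i] a) := by
    rw [Finset.sum_Ico_consecutive _ (Nat.zero_le p) (Nat.le_add_right p q), ← Finset.range_eq_Ico]
  rw [h1, ← Finset.range_eq_Ico, Finset.sum_Ico_eq_sum_range]
  congr 1
  have h2 : p + q - p = q := by omega
  rw [h2]
  refine Finset.sum_congr rfl fun k _ => ?_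
  rw [add_comm p k, Function.iterate_add_apply]

lemma abs_birkN_le {φ : (ℕ → A) → ℝ} {K : ℝ} (hKb : ∀ a, |φ a| ≤ K) (n : ℕ) (a : ℕ → A) :
    |birkN φ n a| ≤ n * K := by
  calc |birkN φ n a| ≤ ∑ i ∈ Finset.range n, |φ (shift^[i] a)| :=
        Finset.abs_sum_le_sum_abs _ _
    _ ≤ ∑ _i ∈ Finset.range n, K := Finset.sum_le_sum fun i _ => hKb _
    _ = n * K := by rw [Finset.sum_const, Finset.card_range, nsmul_eq_mul]

lemma birkN_le {φ : (ℕ → A) → ℝ} {K : ℝ} (hKb : ∀ a, |φ a| ≤ K) (n : ℕ) (a : ℕ → A) :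
    birkN φ n a ≤ n * K := le_of_abs_le (abs_birkN_le hKb n a)

lemma birkN_ge {φ : (ℕ → A) → ℝ} {K : ℝ} (hKb : ∀ a, |φ a| ≤ K) (n : ℕ) (a : ℕ → A) :
    -(n * K) ≤ birkN φ n a := neg_le_of_abs_le (abs_birkN_le hKb n a)

lemma bddAbove_birk_img {φ : (ℕ → A) → ℝ} {K : ℝ} (hKb : ∀ a, |φ a| ≤ K) (n : ℕ)
    (w : Fin n → A) : BddAbove (birkN φ n '' cylN n w) := by
  refine ⟨n * K, ?_⟩
  rintro x ⟨a, -, rfl⟩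
  exact birkN_le hKb n a

lemma le_phiN {φ : (ℕ → A) → ℝ} {K : ℝ} (hKb : ∀ a, |φ a| ≤ K) {n : ℕ} {w : Fin n → A}
    {a : ℕ → A} (ha : a ∈ cylN n w) : birkN φ n a ≤ PhiN φ n w :=
  le_csSup (bddAbove_birk_img hKb n w) ⟨a, ha, rfl⟩

lemma phiN_le {φ : (ℕ → A) → ℝ} {V : ℝ}
    (hVb : ∀ n a b, (∀ i, i < n → a i = b i) → |birkN φ n a - birkN φ n b| ≤ V)
    {n : ℕ} {w : Fin n → A} {a : ℕ → A} (ha : a ∈ cylN n w) :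
    PhiN φ n w ≤ birkN φ n a + V := by
  refine csSup_le ((cylN_nonempty w).image _) ?_
  rintro x ⟨b, hb, rfl⟩
  have hag : ∀ i, i < n → b i = a i := fun i h => (hb i h).trans (ha i h).symm
  have := abs_le.mp (hVb n b a hag)
  linarith [this.2]

lemma phiN_le_nK {φ : (ℕ → A) → ℝ} {K : ℝ} (hKb : ∀ a, |φ a| ≤ K) (n : ℕ) (w : Fin n → A) :
    PhiN φ n w ≤ n * K := by
  refine csSup_le ((cylN_nonempty w).image _) ?_
  rintro x ⟨a, -, rfl⟩
  exact birkN_le hKb n a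

lemma phiN_ge {φ : (ℕ → A) → ℝ} {K : ℝ} (hKb : ∀ a, |φ a| ≤ K) (n : ℕ) (w : Fin n → A) :
    -(n * K) ≤ PhiN φ n w :=
  le_trans (birkN_ge hKb n (wext w)) (le_phiN hKb (wext_mem_cyl w))

lemma mem_cyl_wseg {n : ℕ} {w : Fin n → A} {a : ℕ → A} (ha : a ∈ cylN n w)
    (p q : ℕ) (h : p + q ≤ n) : shift^[p] a ∈ cylN q (wseg w p q h) := by
  intro i hi
  rw [shift_iter_apply]
  rw [ha (i + p) (by omega)]
  show w ⟨i + p, by omega⟩ = w ⟨p + i, by omega⟩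
  exact wapp w _ _ (by omega)

lemma phiN_split {φ : (ℕ → A) → ℝ} {K V : ℝ} (hKb : ∀ a, |φ a| ≤ K)
    (hVb : ∀ n a b, (∀ i, i < n → a i = b i) → |birkN φ n a - birkN φ n b| ≤ V)
    (p q : ℕ) (w : Fin (p + q) → A) :
    PhiN φ (p + q) w ≤ PhiN φ p (wseg w 0 p (by omega)) + PhiN φ q (wseg w p q le_rfl) := by
  refine csSup_le ((cylN_nonempty w).image _) ?_
  rintro x ⟨a, ha, rfl⟩
  rw [birkN_add]
  have h1 : a ∈ cylN p (wseg w 0 p (by omega)) := by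
    have := mem_cyl_wseg ha 0 p (by omega)
    simpa using this
  exact add_le_add (le_phiN hKb h1) (le_phiN hKb (mem_cyl_wseg ha p q le_rfl))

lemma wmemN_wseg {X : Set (ℕ → A)} (hX : IsSubshift X) {n : ℕ} {w : Fin n → A}
    (hw : wmemN X w) (p q : ℕ) (h : p + q ≤ n) : wmemN X (wseg w p q h) := by
  obtain ⟨a, haX, hav⟩ := hw
  refine ⟨shift^[p] a, shift_iter_mem hX p haX, fun i hi => ?_⟩
  rw [shift_iter_apply, hav (i + p) (by omega)]
  show w ⟨i + p, by omega⟩ = w ⟨p + i, by omega⟩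
  exact wapp w _ _ (by omega)

end Aux17
/-! #### Joining words and sum manipulations -/

def wjoin {p q : ℕ} (u : Fin p → A) (v : Fin q → A) : Fin (p + q) → A :=
  fun i => if h : i.1 < p then u ⟨i.1, h⟩ else v ⟨i.1 - p, by have := i.2; omega⟩

lemma wseg_wjoin_left {p q : ℕ} (u : Fin p → A) (v : Fin q → A) (h : 0 + p ≤ p + q) :
    wseg (wjoin u v) 0 p h = u := by
  funext i
  show wjoin u v ⟨0 + i.1, _⟩ = u i
  have h1 : 0 + i.1 < p := by have := i.2; omega
  simp only [wjoin, dif_pos h1]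
  exact wapp u _ _ (by omega)

lemma wseg_wjoin_right {p q : ℕ} (u : Fin p → A) (v : Fin q → A) (h : p + q ≤ p + q) :
    wseg (wjoin u v) p q h = v := by
  funext i
  show wjoin u v ⟨p + i.1, _⟩ = v i
  have h1 : ¬ (p + i.1 < p) := by omega
  simp only [wjoin, dif_neg h1]
  exact wapp v _ _ (by omega)

def joinEquiv (p q : ℕ) : ((Fin p → A) × (Fin q → A)) ≃ (Fin (p + q) → A) where
  toFun uv := wjoin uv.1 uv.2
  invFun w := (wseg w 0 p (by omega), wseg w p q le_rfl)
  left_inv := by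
    rintro ⟨u, v⟩
    rw [Prod.mk.injEq]
    exact ⟨wseg_wjoin_left u v _, wseg_wjoin_right u v _⟩
  right_inv := by
    intro w
    funext i
    show wjoin (wseg w 0 p (by omega)) (wseg w p q le_rfl) i = w i
    by_cases h : i.1 < p
    · simp only [wjoin, dif_pos h]
      show w ⟨0 + i.1, by have := i.2; omega⟩ = w i
      exact wapp w _ _ (by omega)
    · simp only [wjoin, dif_neg h]
      show w ⟨p + (i.1 - p), by have := i.2; omega⟩ = w i
      exact wapp w _ _ (by have := i.2; omega)

lemma sum_join (p q : ℕ) (F : (Fin (p + q) → A) → ℝ) :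
    (∑ w : Fin (p + q) → A, F w) = ∑ u : Fin p → A, ∑ v : Fin q → A, F (wjoin u v) := by
  rw [← Equiv.sum_comp (joinEquiv (A := A) p q) F, Fintype.sum_prod_type]
  rfl

lemma sum_inj_le {α β : Type*} [Fintype β] [DecidableEq β] (s : Finset α) (e : α → β)
    (he : ∀ x ∈ s, ∀ y ∈ s, e x = e y → x = y)
    (f : α → ℝ) (g : β → ℝ) (hg : ∀ y, 0 ≤ g y) (hfg : ∀ x ∈ s, f x ≤ g (e x)) :
    ∑ x ∈ s, f x ≤ ∑ y, g y := by
  calc ∑ x ∈ s, f x ≤ ∑ x ∈ s, g (e x) := Finset.sum_le_sum hfg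
    _ = ∑ y ∈ s.image e, g y := (Finset.sum_image he).symm
    _ ≤ ∑ y, g y :=
        Finset.sum_le_sum_of_subset_of_nonneg (Finset.subset_univ _) (fun y _ _ => hg y)

lemma Zs_nonneg (X : Set (ℕ → A)) (φ : (ℕ → A) → ℝ) (n : ℕ) : 0 ≤ Zs X φ n :=
  Finset.sum_nonneg fun w _ => by split_ifs <;> positivity

lemma Ys_nonneg (X : Set (ℕ → A)) (φ : (ℕ → A) → ℝ) (ω : List A) (n : ℕ) :
    0 ≤ Ys X φ ω n :=
  Finset.sum_nonneg fun w _ => by split_ifs <;> positivity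

lemma Ys_le_Zs (X : Set (ℕ → A)) (φ : (ℕ → A) → ℝ) (ω : List A) (n : ℕ) :
    Ys X φ ω n ≤ Zs X φ n := by
  refine Finset.sum_le_sum fun w _ => ?_
  by_cases h : wmemN X w ∧ ofree ω w
  · rw [if_pos h, if_pos h.1]
  · rw [if_neg h]; split_ifs <;> positivity

lemma wmemN_wjoin_left {X : Set (ℕ → A)} (hX : IsSubshift X) {p q : ℕ}
    {u : Fin p → A} {v : Fin q → A} (h : wmemN X (wjoin u v)) : wmemN X u := by
  have := wmemN_wseg hX h 0 p (by omega)
  rwa [wseg_wjoin_left] at this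

lemma wmemN_wjoin_right {X : Set (ℕ → A)} (hX : IsSubshift X) {p q : ℕ}
    {u : Fin p → A} {v : Fin q → A} (h : wmemN X (wjoin u v)) : wmemN X v := by
  have := wmemN_wseg hX h p q le_rfl
  rwa [wseg_wjoin_right] at this

lemma ofree_wseg {ω : List A} {n : ℕ} {w : Fin n → A} (hw : ofree ω w)
    (p q : ℕ) (h : p + q ≤ n) : ofree ω (wseg w p q h) := by
  intro i hig hocc
  refine hw (p + i) (by omega) ?_
  intro j hj
  have h1 : p + i + j < n := by omega
  have h2 : i + j < q := by omega
  rw [wext_lt _ h1]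
  have := hocc j hj
  rw [wext_lt _ h2] at this
  rw [← this]
  show w ⟨p + i + j, h1⟩ = w ⟨p + (i + j), by omega⟩
  exact wapp w _ _ (by omega)

lemma ofree_wjoin_left {ω : List A} {p q : ℕ} {u : Fin p → A} {v : Fin q → A}
    (h : ofree ω (wjoin u v)) : ofree ω u := by
  have := ofree_wseg h 0 p (by omega)
  rwa [wseg_wjoin_left] at this

lemma ofree_wjoin_right {ω : List A} {p q : ℕ} {u : Fin p → A} {v : Fin q → A}
    (h : ofree ω (wjoin u v)) : ofree ω v := by
  have := ofree_wseg h p q le_rfl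
  rwa [wseg_wjoin_right] at this

lemma phiN_wjoin {φ : (ℕ → A) → ℝ} {K V : ℝ} (hKb : ∀ a, |φ a| ≤ K)
    (hVb : ∀ n a b, (∀ i, i < n → a i = b i) → |birkN φ n a - birkN φ n b| ≤ V)
    (p q : ℕ) (u : Fin p → A) (v : Fin q → A) :
    PhiN φ (p + q) (wjoin u v) ≤ PhiN φ p u + PhiN φ q v := by
  have := phiN_split hKb hVb p q (wjoin u v)
  rwa [wseg_wjoin_left, wseg_wjoin_right] at this

lemma Zs_subadd {X : Set (ℕ → A)} {φ : (ℕ → A) → ℝ} {K V : ℝ} (hX : IsSubshift X)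
    (hKb : ∀ a, |φ a| ≤ K)
    (hVb : ∀ n a b, (∀ i, i < n → a i = b i) → |birkN φ n a - birkN φ n b| ≤ V)
    (p q : ℕ) : Zs X φ (p + q) ≤ Zs X φ p * Zs X φ q := by
  classical
  rw [Zs, sum_join p q, Zs, Zs, Finset.sum_mul_sum]
  refine Finset.sum_le_sum fun u _ => Finset.sum_le_sum fun v _ => ?_
  by_cases h : wmemN X (wjoin u v)
  · rw [if_pos h, if_pos (wmemN_wjoin_left hX h), if_pos (wmemN_wjoin_right hX h),
      ← Real.exp_add]
    exact Real.exp_le_exp.2 (phiN_wjoin hKb hVb p q u v)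
  · rw [if_neg h]; split_ifs <;> positivity

lemma Ys_subadd {X : Set (ℕ → A)} {φ : (ℕ → A) → ℝ} {K V : ℝ} (hX : IsSubshift X)
    (hKb : ∀ a, |φ a| ≤ K)
    (hVb : ∀ n a b, (∀ i, i < n → a i = b i) → |birkN φ n a - birkN φ n b| ≤ V)
    (ω : List A) (p q : ℕ) : Ys X φ ω (p + q) ≤ Ys X φ ω p * Ys X φ ω q := by
  classical
  rw [Ys, sum_join p q, Ys, Ys, Finset.sum_mul_sum]
  refine Finset.sum_le_sum fun u _ => Finset.sum_le_sum fun v _ => ?_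
  by_cases h : wmemN X (wjoin u v) ∧ ofree ω (wjoin u v)
  · rw [if_pos h, if_pos ⟨wmemN_wjoin_left hX h.1, ofree_wjoin_left h.2⟩,
      if_pos ⟨wmemN_wjoin_right hX h.1, ofree_wjoin_right h.2⟩, ← Real.exp_add]
    exact Real.exp_le_exp.2 (phiN_wjoin hKb hVb p q u v)
  · rw [if_neg h]; split_ifs <;> positivity

lemma card_words (q : ℕ) :
    ((Finset.univ : Finset (Fin q → A)).card : ℝ) = (Fintype.card A : ℝ) ^ q := by
  rw [Finset.card_univ, Fintype.card_fun, Fintype.card_fin]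
  push_cast
  rfl

lemma Zs_drop {X : Set (ℕ → A)} {φ : (ℕ → A) → ℝ} {K V : ℝ} (hX : IsSubshift X)
    (hKb : ∀ a, |φ a| ≤ K)
    (hVb : ∀ n a b, (∀ i, i < n → a i = b i) → |birkN φ n a - birkN φ n b| ≤ V)
    (p q : ℕ) :
    Zs X φ (p + q) ≤ Zs X φ p * ((Fintype.card A : ℝ) ^ q * Real.exp (q * K)) := by
  classical
  rw [Zs, sum_join p q]
  have hstep : ∀ u : Fin p → A, ∀ v : Fin q → A,
      (if wmemN X (wjoin u v) then Real.exp (PhiN φ (p + q) (wjoin u v)) else 0) ≤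
      (if wmemN X u then Real.exp (PhiN φ p u) else 0) * Real.exp (q * K) := by
    intro u v
    by_cases h : wmemN X (wjoin u v)
    · rw [if_pos h, if_pos (wmemN_wjoin_left hX h), ← Real.exp_add]
      refine Real.exp_le_exp.2 ?_
      have h1 := phiN_wjoin hKb hVb p q u v
      have h2 := phiN_le_nK hKb q v
      linarith
    · rw [if_neg h]; split_ifs <;> positivity
  calc ∑ u : Fin p → A, ∑ v : Fin q → A,
        (if wmemN X (wjoin u v) then Real.exp (PhiN φ (p + q) (wjoin u v)) else 0)
      ≤ ∑ u : Fin p → A, ∑ _v : Fin q → A,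
        (if wmemN X u then Real.exp (PhiN φ p u) else 0) * Real.exp (q * K) :=
        Finset.sum_le_sum fun u _ => Finset.sum_le_sum fun v _ => hstep u v
    _ = Zs X φ p * ((Fintype.card A : ℝ) ^ q * Real.exp (q * K)) := by
        rw [Zs]
        rw [Finset.sum_mul]
        refine Finset.sum_congr rfl fun u _ => ?_
        rw [Finset.sum_const, nsmul_eq_mul, ← card_words (A := A) q]
        ring

lemma Ys_blocks {X : Set (ℕ → A)} {φ : (ℕ → A) → ℝ} {K V : ℝ} (hX : IsSubshift X)
    (hKb : ∀ a, |φ a| ≤ K)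
    (hVb : ∀ n a b, (∀ i, i < n → a i = b i) → |birkN φ n a - birkN φ n b| ≤ V)
    (ω : List A) (r : ℕ) :
    ∀ s t : ℕ, Ys X φ ω (s * r + t) ≤ (Ys X φ ω r) ^ s * Zs X φ t := by
  intro s
  induction s with
  | zero =>
      intro t
      have h0 : 0 * r + t = t := by omega
      rw [h0, pow_zero, one_mul]
      exact Ys_le_Zs X φ ω t
  | succ s ih =>
      intro t
      have h1 : (s + 1) * r + t = r + (s * r + t) := by ring
      rw [h1]
      calc Ys X φ ω (r + (s * r + t)) ≤ Ys X φ ω r * Ys X φ ω (s * r + t) :=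
            Ys_subadd hX hKb hVb ω r (s * r + t)
        _ ≤ Ys X φ ω r * ((Ys X φ ω r) ^ s * Zs X φ t) :=
            mul_le_mul_of_nonneg_left (ih t) (Ys_nonneg X φ ω r)
        _ = (Ys X φ ω r) ^ (s + 1) * Zs X φ t := by ring
/-! #### Gluing via specification -/

lemma wmemN_iff_lang {X : Set (ℕ → A)} {p : ℕ} (u : Fin (p + 1) → A) :
    u ∈ lang X p ↔ wmemN X u := by
  constructor
  · rintro ⟨a, ha, rfl⟩
    exact ⟨a, ha, fun i h => rfl⟩
  · rintro ⟨a, ha, hv⟩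
    refine ⟨a, ha, funext fun i => ?_⟩
    show a i.1 = u i
    rw [hv i.1 i.2]

lemma wrdN_mem {X : Set (ℕ → A)} {z : ℕ → A} (hz : z ∈ X) (n : ℕ) : wmemN X (wrdN z n) :=
  ⟨z, hz, fun i h => rfl⟩

lemma mem_cyl_wrdN (z : ℕ → A) (n : ℕ) : z ∈ cylN n (wrdN z n) := fun i h => rfl

lemma glue_seq {X : Set (ℕ → A)} {ℓ : ℕ} (hspec : Specified X ℓ)
    {a b : ℕ} (ha : 1 ≤ a) (hb : 1 ≤ b) (u : Fin a → A) (v : Fin b → A)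
    (hu : wmemN X u) (hv : wmemN X v) :
    ∃ z, z ∈ X ∧ (∀ i, ∀ h : i < a, z i = u ⟨i, h⟩) ∧
      (∀ j, ∀ h : j < b, z (a + ℓ + j) = v ⟨j, h⟩) := by
  obtain ⟨p, rfl⟩ : ∃ p, a = p + 1 := ⟨a - 1, by omega⟩
  obtain ⟨q, rfl⟩ : ∃ q, b = q + 1 := ⟨b - 1, by omega⟩
  obtain ⟨c, hcper, hcu, hcv⟩ :=
    hspec p q u v ((wmemN_iff_lang u).2 hu) ((wmemN_iff_lang v).2 hv) ℓ le_rfl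
  refine ⟨c, hcper.1, fun i h => hcu ⟨i, h⟩, fun j h => ?_⟩
  have := hcv ⟨j, h⟩
  show c (p + 1 + ℓ + j) = v ⟨j, h⟩
  rw [show p + 1 + ℓ + j = p + ℓ + 1 + j from by omega]
  exact this

open Classical in
noncomputable def glueZ (X : Set (ℕ → A)) (ℓ : ℕ) {a b : ℕ}
    (u : Fin a → A) (v : Fin b → A) : ℕ → A :=
  if h : ∃ z, z ∈ X ∧ (∀ i, ∀ hi : i < a, z i = u ⟨i, hi⟩) ∧
      (∀ j, ∀ hj : j < b, z (a + ℓ + j) = v ⟨j, hj⟩)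
  then Classical.choose h else fun _ => wdef

lemma glueZ_spec {X : Set (ℕ → A)} {ℓ : ℕ} (hspec : Specified X ℓ)
    {a b : ℕ} (ha : 1 ≤ a) (hb : 1 ≤ b) (u : Fin a → A) (v : Fin b → A)
    (hu : wmemN X u) (hv : wmemN X v) :
    glueZ X ℓ u v ∈ X ∧ (∀ i, ∀ hi : i < a, glueZ X ℓ u v i = u ⟨i, hi⟩) ∧
      (∀ j, ∀ hj : j < b, glueZ X ℓ u v (a + ℓ + j) = v ⟨j, hj⟩) := by
  have h := glue_seq hspec ha hb u v hu hv
  rw [glueZ, dif_pos h]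
  exact Classical.choose_spec h

lemma Zs_glue {X : Set (ℕ → A)} {φ : (ℕ → A) → ℝ} {K V : ℝ} {ℓ : ℕ}
    (hX : IsSubshift X) (hspec : Specified X ℓ)
    (hKb : ∀ a, |φ a| ≤ K) (hK0 : 0 ≤ K)
    (hVb : ∀ n a b, (∀ i, i < n → a i = b i) → |birkN φ n a - birkN φ n b| ≤ V)
    (hV0 : 0 ≤ V)
    (a b : ℕ) (ha : 1 ≤ a) (hb : 1 ≤ b) :
    Zs X φ a * Zs X φ b ≤ Real.exp (2 * V + ℓ * K) * Zs X φ (a + ℓ + b) := by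
  classical
  set s : Finset ((Fin a → A) × (Fin b → A)) :=
    Finset.univ.filter (fun uv => wmemN X uv.1 ∧ wmemN X uv.2) with hs
  have hL : Zs X φ a * Zs X φ b = ∑ uv ∈ s, Real.exp (PhiN φ a uv.1 + PhiN φ b uv.2) := by
    rw [Zs, Zs, Finset.sum_mul_sum, hs, Finset.sum_filter, Fintype.sum_prod_type]
    refine Finset.sum_congr rfl fun u _ => Finset.sum_congr rfl fun v _ => ?_
    by_cases h1 : wmemN X u <;> by_cases h2 : wmemN X v <;>
      simp [h1, h2, Real.exp_add]
  rw [hL]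
  have hRHS : Real.exp (2 * V + ℓ * K) * Zs X φ (a + ℓ + b) =
      ∑ w : Fin (a + ℓ + b) → A, Real.exp (2 * V + ℓ * K) *
        (if wmemN X w then Real.exp (PhiN φ (a + ℓ + b) w) else 0) := by
    rw [Zs, Finset.mul_sum]
  rw [hRHS]
  refine sum_inj_le s (fun uv => wrdN (glueZ X ℓ uv.1 uv.2) (a + ℓ + b)) ?_ _ _
    (fun y => by split_ifs <;> positivity) ?_
  · -- injectivity
    intro x hx y hy hexy
    rw [hs, Finset.mem_filter] at hx hy
    obtain ⟨hx1, hx2⟩ := hx.2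
    obtain ⟨hy1, hy2⟩ := hy.2
    have sx := glueZ_spec hspec ha hb x.1 x.2 hx1 hx2
    have sy := glueZ_spec hspec ha hb y.1 y.2 hy1 hy2
    have h1 : x.1 = y.1 := by
      funext i
      have e1 : glueZ X ℓ x.1 x.2 i.1 = x.1 i := by
        rw [sx.2.1 i.1 i.2]
      have e2 : glueZ X ℓ y.1 y.2 i.1 = y.1 i := by
        rw [sy.2.1 i.1 i.2]
      have e3 : glueZ X ℓ x.1 x.2 i.1 = glueZ X ℓ y.1 y.2 i.1 := by
        have := congrFun hexy ⟨i.1, by have := i.2; omega⟩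
        exact this
      rw [← e1, e3, e2]
    have h2 : x.2 = y.2 := by
      funext j
      have e1 : glueZ X ℓ x.1 x.2 (a + ℓ + j.1) = x.2 j := by
        rw [sx.2.2 j.1 j.2]
      have e2 : glueZ X ℓ y.1 y.2 (a + ℓ + j.1) = y.2 j := by
        rw [sy.2.2 j.1 j.2]
      have e3 : glueZ X ℓ x.1 x.2 (a + ℓ + j.1) = glueZ X ℓ y.1 y.2 (a + ℓ + j.1) := by
        have := congrFun hexy ⟨a + ℓ + j.1, by have := j.2; omega⟩
        exact this
      rw [← e1, e3, e2]
    exact Prod.ext h1 h2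
  · -- weight bound
    intro uv huv
    rw [hs, Finset.mem_filter] at huv
    obtain ⟨hu, hv⟩ := huv.2
    have sp := glueZ_spec hspec ha hb uv.1 uv.2 hu hv
    set z := glueZ X ℓ uv.1 uv.2 with hz
    rw [if_pos (wrdN_mem sp.1 (a + ℓ + b))]
    rw [← Real.exp_add, Real.exp_le_exp]
    -- PhiN a uv.1 + PhiN b uv.2 ≤ 2V + ℓK + PhiN (a+ℓ+b) (wrdN z _)
    have hbig : birkN φ (a + ℓ + b) z ≤ PhiN φ (a + ℓ + b) (wrdN z (a + ℓ + b)) :=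
      le_phiN hKb (mem_cyl_wrdN z (a + ℓ + b))
    have hsplit : birkN φ (a + ℓ + b) z =
        birkN φ a z + birkN φ ℓ (shift^[a] z) + birkN φ b (shift^[a + ℓ] z) := by
      rw [birkN_add φ (a + ℓ) b z, birkN_add φ a ℓ z]
    have hcyl1 : z ∈ cylN a uv.1 := fun i h => sp.2.1 i h
    have hcyl2 : shift^[a + ℓ] z ∈ cylN b uv.2 := by
      intro j h
      rw [shift_iter_apply]
      rw [show j + (a + ℓ) = a + ℓ + j from by omega]
      exact sp.2.2 j h
    have hb1 : PhiN φ a uv.1 ≤ birkN φ a z + V := phiN_le hVb hcyl1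
    have hb2 : PhiN φ b uv.2 ≤ birkN φ b (shift^[a + ℓ] z) + V := phiN_le hVb hcyl2
    have hb3 : -(ℓ * K) ≤ birkN φ ℓ (shift^[a] z) := birkN_ge hKb ℓ _
    have hK : (ℓ:ℝ) * K ≥ 0 := by positivity
    linarith
  
lemma Zs_glue_chain {X : Set (ℕ → A)} {φ : (ℕ → A) → ℝ} {K V : ℝ} {ℓ : ℕ}
    (hX : IsSubshift X) (hspec : Specified X ℓ)
    (hKb : ∀ a, |φ a| ≤ K) (hK0 : 0 ≤ K)
    (hVb : ∀ n a b, (∀ i, i < n → a i = b i) → |birkN φ n a - birkN φ n b| ≤ V)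
    (hV0 : 0 ≤ V) (r : ℕ) (hr : 1 ≤ r) :
    ∀ s t : ℕ, 1 ≤ t →
      (Zs X φ r) ^ s * Zs X φ t ≤
        Real.exp ((2 * V + ℓ * K) * s) * Zs X φ (s * (r + ℓ) + t) := by
  intro s
  induction s with
  | zero =>
      intro t ht
      simp
  | succ s ih =>
      intro t ht
      have h1 : 1 ≤ s * (r + ℓ) + t := by omega
      push_cast
      calc (Zs X φ r) ^ (s + 1) * Zs X φ t
          = Zs X φ r * ((Zs X φ r) ^ s * Zs X φ t) := by ring
        _ ≤ Zs X φ r * (Real.exp ((2 * V + ℓ * K) * s) * Zs X φ (s * (r + ℓ) + t)) :=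
            mul_le_mul_of_nonneg_left (ih t ht) (Zs_nonneg X φ r)
        _ = Real.exp ((2 * V + ℓ * K) * s) * (Zs X φ r * Zs X φ (s * (r + ℓ) + t)) := by
            ring
        _ ≤ Real.exp ((2 * V + ℓ * K) * s) *
            (Real.exp (2 * V + ℓ * K) * Zs X φ (r + ℓ + (s * (r + ℓ) + t))) := by
            refine mul_le_mul_of_nonneg_left ?_ (Real.exp_pos _).le
            exact Zs_glue hX hspec hKb hK0 hVb hV0 r (s * (r + ℓ) + t) hr h1
        _ = Real.exp ((2 * V + ℓ * K) * (s + 1)) * Zs X φ ((s + 1) * (r + ℓ) + t) := by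
            rw [show r + ℓ + (s * (r + ℓ) + t) = (s + 1) * (r + ℓ) + t from by ring,
              ← mul_assoc, ← Real.exp_add]
            congr 2
            push_cast
            ring
/-! #### Insertion of the magic word -/

lemma phiN_congr' {φ : (ℕ → A) → ℝ} {n n' : ℕ} (h : n = n') {w : Fin n → A}
    {w' : Fin n' → A} (hval : ∀ i, ∀ hi : i < n, ∀ hi' : i < n', w ⟨i, hi⟩ = w' ⟨i, hi'⟩) :
    PhiN φ n w = PhiN φ n' w' := by
  subst h
  have hww : w = w' := funext fun i => hval i.1 i.2 i.2
  rw [hww]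

/-- Encoding: insert the word `ω` (with gaps `ℓ`) at position `sp` of `w`. -/
noncomputable def encZA (X : Set (ℕ → A)) (ℓ : ℕ) (ω : List A) (sp r : ℕ)
    (w : Fin r → A) : ℕ → A :=
  glueZ X ℓ
    (wrdN (glueZ X ℓ (fun i : Fin sp => wext w i.1) (fun i : Fin ω.length => ω.get i))
      (sp + ℓ + ω.length))
    (fun j : Fin (r - sp) => wext w (sp + j.1))

lemma encZA_facts {X : Set (ℕ → A)} {ℓ : ℕ} (hX : IsSubshift X) (hspec : Specified X ℓ)
    (ω : List A) (hg : 1 ≤ ω.length)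
    (hωmem : wmemN X (fun i : Fin ω.length => ω.get i))
    {sp r : ℕ} (hsp1 : 1 ≤ sp) (hsple : sp + ω.length + 2 * ℓ + 1 ≤ r)
    (w : Fin r → A) (hw : wmemN X w) :
    encZA X ℓ ω sp r w ∈ X ∧
    (∀ i, i < sp → encZA X ℓ ω sp r w i = wext w i) ∧
    (∀ j, ∀ hj : j < ω.length, encZA X ℓ ω sp r w (sp + ℓ + j) = ω.get ⟨j, hj⟩) ∧
    (∀ j, j < r - sp →
      encZA X ℓ ω sp r w (sp + (2 * ℓ + ω.length) + j) = wext w (sp + j)) := by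
  have hu : wmemN X (fun i : Fin sp => wext w i.1) := by
    have he : (fun i : Fin sp => wext w i.1) = wseg w 0 sp (by omega) := by
      funext i
      rw [wext_lt w (show i.1 < r by have := i.2; omega)]
      show w _ = w ⟨0 + i.1, by have := i.2; omega⟩
      exact wapp w _ _ (by omega)
    rw [he]
    exact wmemN_wseg hX hw 0 sp (by omega)
  have hv : wmemN X (fun j : Fin (r - sp) => wext w (sp + j.1)) := by
    have he : (fun j : Fin (r - sp) => wext w (sp + j.1)) = wseg w sp (r - sp) (by omega) := by
      funext j
      rw [wext_lt w (show sp + j.1 < r by have := j.2; omega)]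
      rfl
    rw [he]
    exact wmemN_wseg hX hw sp (r - sp) (by omega)
  have spec1 := glueZ_spec hspec hsp1 hg (fun i : Fin sp => wext w i.1)
    (fun i : Fin ω.length => ω.get i) hu hωmem
  have hw1 : wmemN X (wrdN (glueZ X ℓ (fun i : Fin sp => wext w i.1)
      (fun i : Fin ω.length => ω.get i)) (sp + ℓ + ω.length)) := wrdN_mem spec1.1 _
  have spec2 := glueZ_spec hspec (show 1 ≤ sp + ℓ + ω.length by omega)
    (show 1 ≤ r - sp by omega) _ (fun j : Fin (r - sp) => wext w (sp + j.1)) hw1 hv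
  refine ⟨spec2.1, ?_, ?_, ?_⟩
  · intro i hi
    have h1 := spec2.2.1 i (by omega)
    simp only [encZA]
    rw [h1]
    show glueZ X ℓ (fun i : Fin sp => wext w i.1) (fun i : Fin ω.length => ω.get i) i = _
    rw [spec1.2.1 i hi]
  · intro j hj
    have h1 := spec2.2.1 (sp + ℓ + j) (by omega)
    simp only [encZA]
    rw [h1]
    show glueZ X ℓ (fun i : Fin sp => wext w i.1) (fun i : Fin ω.length => ω.get i)
      (sp + ℓ + j) = _
    rw [spec1.2.2 j hj]
  · intro j hj
    have h1 := spec2.2.2 j hj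
    simp only [encZA]
    rw [show sp + (2 * ℓ + ω.length) + j = sp + ℓ + ω.length + ℓ + j from by omega]
    rw [h1]

lemma encZA_phi {X : Set (ℕ → A)} {φ : (ℕ → A) → ℝ} {K V : ℝ} {ℓ : ℕ}
    (hX : IsSubshift X) (hspec : Specified X ℓ)
    (hKb : ∀ a, |φ a| ≤ K) (hK0 : 0 ≤ K)
    (hVb : ∀ n a b, (∀ i, i < n → a i = b i) → |birkN φ n a - birkN φ n b| ≤ V)
    (hV0 : 0 ≤ V)
    (ω : List A) (hg : 1 ≤ ω.length)
    (hωmem : wmemN X (fun i : Fin ω.length => ω.get i))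
    {sp r : ℕ} (hsp1 : 1 ≤ sp) (hsple : sp + ω.length + 2 * ℓ + 1 ≤ r)
    (w : Fin r → A) (hw : wmemN X w) :
    PhiN φ r w ≤
      PhiN φ (r + (2 * ℓ + ω.length))
        (wrdN (encZA X ℓ ω sp r w) (r + (2 * ℓ + ω.length)))
      + (2 * V + (2 * (ℓ : ℝ) + (ω.length : ℝ)) * K) := by
  obtain ⟨hzX, hF1, hF2, hF3⟩ := encZA_facts hX hspec ω hg hωmem hsp1 hsple w hw
  set z := encZA X ℓ ω sp r w with hz
  set u : Fin sp → A := fun i => wext w i.1 with hudef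
  set v : Fin (r - sp) → A := fun j => wext w (sp + j.1) with hvdef
  -- split of `PhiN φ r w`
  have hsplitw : PhiN φ r w ≤ PhiN φ sp u + PhiN φ (r - sp) v := by
    have h1 := phiN_split hKb hVb sp (r - sp)
      (fun i : Fin (sp + (r - sp)) => wext w i.1)
    have e0 : PhiN φ (sp + (r - sp)) (fun i : Fin (sp + (r - sp)) => wext w i.1)
        = PhiN φ r w := by
      refine phiN_congr' (by omega) fun i hi hi' => ?_
      exact wext_lt w hi'
    have e1 : wseg (fun i : Fin (sp + (r - sp)) => wext w i.1) 0 sp (by omega) = u := by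
      funext i
      show wext w (0 + i.1) = wext w i.1
      exact congrArg (wext w) (by omega)
    have e2 : wseg (fun i : Fin (sp + (r - sp)) => wext w i.1) sp (r - sp) le_rfl = v := by
      funext j
      rfl
    rw [e0, e1, e2] at h1
    exact h1
  have hNeq : r + (2 * ℓ + ω.length) = sp + (ℓ + (ω.length + (ℓ + (r - sp)))) := by omega
  have hb : birkN φ (r + (2 * ℓ + ω.length)) z =
      birkN φ sp z + (birkN φ ℓ (shift^[sp] z) +
        (birkN φ ω.length (shift^[ℓ] (shift^[sp] z)) +
          (birkN φ ℓ (shift^[ω.length] (shift^[ℓ] (shift^[sp] z))) +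
            birkN φ (r - sp)
              (shift^[ℓ] (shift^[ω.length] (shift^[ℓ] (shift^[sp] z))))))) := by
    rw [hNeq, birkN_add, birkN_add, birkN_add, birkN_add]
  have hcylu : z ∈ cylN sp u := by
    intro i h
    rw [hF1 i h]
  have hcylv : (shift^[ℓ] (shift^[ω.length] (shift^[ℓ] (shift^[sp] z)))) ∈
      cylN (r - sp) v := by
    intro t ht
    rw [shift_iter_apply, shift_iter_apply, shift_iter_apply, shift_iter_apply]
    rw [show t + ℓ + ω.length + ℓ + sp = sp + (2 * ℓ + ω.length) + t from by omega]
    rw [hF3 t ht]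
  have h1 : PhiN φ sp u ≤ birkN φ sp z + V := phiN_le hVb hcylu
  have h5 : PhiN φ (r - sp) v ≤
      birkN φ (r - sp) (shift^[ℓ] (shift^[ω.length] (shift^[ℓ] (shift^[sp] z)))) + V :=
    phiN_le hVb hcylv
  have h2 := birkN_ge hKb ℓ (shift^[sp] z)
  have h3 := birkN_ge hKb ω.length (shift^[ℓ] (shift^[sp] z))
  have h4 := birkN_ge hKb ℓ (shift^[ω.length] (shift^[ℓ] (shift^[sp] z)))
  have hup : birkN φ (r + (2 * ℓ + ω.length)) z ≤
      PhiN φ (r + (2 * ℓ + ω.length)) (wrdN z (r + (2 * ℓ + ω.length))) :=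
    le_phiN hKb (mem_cyl_wrdN z _)
  linarith

lemma encZA_occ1 {X : Set (ℕ → A)} {ℓ : ℕ} (hX : IsSubshift X) (hspec : Specified X ℓ)
    (ω : List A) (hg : 1 ≤ ω.length)
    (hωmem : wmemN X (fun i : Fin ω.length => ω.get i))
    {sp r : ℕ} (hsp1 : 1 ≤ sp) (hsple : sp + ω.length + 2 * ℓ + 1 ≤ r)
    (w : Fin r → A) (hw : wmemN X w) :
    occW ω (wext (wrdN (encZA X ℓ ω sp r w) (r + (2 * ℓ + ω.length)))) (sp + ℓ) := by
  obtain ⟨hzX, hF1, hF2, hF3⟩ := encZA_facts hX hspec ω hg hωmem hsp1 hsple w hw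
  intro j hj
  rw [wext_lt _ (show sp + ℓ + j < r + (2 * ℓ + ω.length) by omega)]
  show encZA X ℓ ω sp r w (sp + ℓ + j) = _
  exact hF2 j hj

lemma encZA_occ2 {X : Set (ℕ → A)} {ℓ : ℕ} (hX : IsSubshift X) (hspec : Specified X ℓ)
    (ω : List A) (hg : 1 ≤ ω.length)
    (hωmem : wmemN X (fun i : Fin ω.length => ω.get i))
    {sp r : ℕ} (hsp1 : 1 ≤ sp) (hsple : sp + ω.length + 2 * ℓ + 1 ≤ r)
    (w : Fin r → A) (hw : wmemN X w) (hfree : ofree ω w) :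
    ∀ i, i + ω.length ≤ r + (2 * ℓ + ω.length) →
      occW ω (wext (wrdN (encZA X ℓ ω sp r w) (r + (2 * ℓ + ω.length)))) i →
      sp < i + ω.length ∧ i < sp + (2 * ℓ + ω.length) := by
  obtain ⟨hzX, hF1, hF2, hF3⟩ := encZA_facts hX hspec ω hg hωmem hsp1 hsple w hw
  intro i hiN hocc
  constructor
  · by_contra hle
    push_neg at hle
    refine hfree i (by omega) ?_
    intro j hj
    have h2 := hocc j hj
    rw [wext_lt _ (show i + j < r + (2 * ℓ + ω.length) by omega)] at h2
    have h2' : encZA X ℓ ω sp r w (i + j) = ω.get ⟨j, hj⟩ := h2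
    have h3 : encZA X ℓ ω sp r w (i + j) = wext w (i + j) := hF1 (i + j) (by omega)
    rw [← h3, h2']
  · by_contra hge
    push_neg at hge
    refine hfree (i - (2 * ℓ + ω.length)) (by omega) ?_
    intro j hj
    have hj2 : i - (2 * ℓ + ω.length) - sp + j < r - sp := by omega
    have h4 := hF3 (i - (2 * ℓ + ω.length) - sp + j) hj2
    rw [show sp + (2 * ℓ + ω.length) + (i - (2 * ℓ + ω.length) - sp + j) = i + j
      from by omega] at h4
    rw [show sp + (i - (2 * ℓ + ω.length) - sp + j) = i - (2 * ℓ + ω.length) + j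
      from by omega] at h4
    have h2 := hocc j hj
    rw [wext_lt _ (show i + j < r + (2 * ℓ + ω.length) by omega)] at h2
    have h2' : encZA X ℓ ω sp r w (i + j) = ω.get ⟨j, hj⟩ := h2
    rw [← h4, h2']

lemma encZA_inj {X : Set (ℕ → A)} {ℓ : ℕ} (hX : IsSubshift X) (hspec : Specified X ℓ)
    (ω : List A) (hg : 1 ≤ ω.length)
    (hωmem : wmemN X (fun i : Fin ω.length => ω.get i))
    {r sp sp' : ℕ} (hsp1 : 1 ≤ sp) (hsp1' : 1 ≤ sp')
    (hc : sp + ω.length + 2 * ℓ + 1 ≤ r) (hc' : sp' + ω.length + 2 * ℓ + 1 ≤ r)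
    (hsep : sp + (2 * ℓ + 2 * ω.length + 1) ≤ sp' ∨
      sp' + (2 * ℓ + 2 * ω.length + 1) ≤ sp ∨ sp = sp')
    (w w' : Fin r → A) (hw : wmemN X w) (hw' : wmemN X w')
    (hf : ofree ω w) (hf' : ofree ω w')
    (heq : wrdN (encZA X ℓ ω sp r w) (r + (2 * ℓ + ω.length)) =
        wrdN (encZA X ℓ ω sp' r w') (r + (2 * ℓ + ω.length))) :
    sp = sp' ∧ w = w' := by
  have hocc := encZA_occ1 hX hspec ω hg hωmem hsp1 hc w hw
  rw [heq] at hocc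
  have hloc := encZA_occ2 hX hspec ω hg hωmem hsp1' hc' w' hw' hf'
    (sp + ℓ) (by omega) hocc
  have hss : sp = sp' := by
    rcases hsep with h | h | h
    · exfalso; omega
    · exfalso; omega
    · exact h
  subst hss
  refine ⟨rfl, ?_⟩
  obtain ⟨hzX, hF1, hF2, hF3⟩ := encZA_facts hX hspec ω hg hωmem hsp1 hc w hw
  obtain ⟨hzX', hF1', hF2', hF3'⟩ := encZA_facts hX hspec ω hg hωmem hsp1 hc' w' hw'
  have hE : ∀ t, t < r + (2 * ℓ + ω.length) →
      encZA X ℓ ω sp r w t = encZA X ℓ ω sp r w' t := by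
    intro t ht
    exact congrFun heq ⟨t, ht⟩
  funext t
  by_cases h : t.1 < sp
  · have e1 : encZA X ℓ ω sp r w t.1 = wext w t.1 := hF1 t.1 h
    have e2 : encZA X ℓ ω sp r w' t.1 = wext w' t.1 := hF1' t.1 h
    have e3 := hE t.1 (by have := t.2; omega)
    rw [wext_lt w t.2] at e1
    rw [wext_lt w' t.2] at e2
    have h4 : w ⟨t.1, t.2⟩ = w' ⟨t.1, t.2⟩ := by rw [← e1, ← e2, e3]
    exact h4
  · have ht2 := t.2
    have hj : t.1 - sp < r - sp := by omega
    have e1 := hF3 (t.1 - sp) hj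
    have e2 := hF3' (t.1 - sp) hj
    have e3 := hE (sp + (2 * ℓ + ω.length) + (t.1 - sp)) (by omega)
    have e4 : wext w (sp + (t.1 - sp)) = wext w' (sp + (t.1 - sp)) := by
      rw [← e1, ← e2, e3]
    rw [show sp + (t.1 - sp) = t.1 from by omega] at e4
    rw [wext_lt w t.2, wext_lt w' t.2] at e4
    exact e4
/-! #### The insertion estimate -/

lemma insertion_bound {X : Set (ℕ → A)} {φ : (ℕ → A) → ℝ} {K V : ℝ} {ℓ : ℕ}
    (hX : IsSubshift X) (hspec : Specified X ℓ)
    (hKb : ∀ a, |φ a| ≤ K) (hK0 : 0 ≤ K)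
    (hVb : ∀ n a b, (∀ i, i < n → a i = b i) → |birkN φ n a - birkN φ n b| ≤ V)
    (hV0 : 0 ≤ V)
    (ω : List A) (hg : 1 ≤ ω.length)
    (hωmem : wmemN X (fun i : Fin ω.length => ω.get i)) (Q : ℕ) :
    (Q : ℝ) * Ys X φ ω ((Q + 1) * (2 * ℓ + 2 * ω.length + 1)) ≤
      Real.exp (2 * V + (2 * (ℓ : ℝ) + (ω.length : ℝ)) * K) *
        Zs X φ ((Q + 1) * (2 * ℓ + 2 * ω.length + 1) + (2 * ℓ + ω.length)) := by
  classical
  have hG1 : 1 ≤ 2 * ℓ + 2 * ω.length + 1 := by omega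
  -- site bounds
  have hsite : ∀ p : ℕ, p < Q →
      1 ≤ (p + 1) * (2 * ℓ + 2 * ω.length + 1) ∧
      (p + 1) * (2 * ℓ + 2 * ω.length + 1) + ω.length + 2 * ℓ + 1 ≤
        (Q + 1) * (2 * ℓ + 2 * ω.length + 1) := by
    intro p hp
    constructor
    · have := Nat.mul_pos (show 0 < p + 1 by omega)
        (show 0 < 2 * ℓ + 2 * ω.length + 1 by omega)
      omega
    · have h2 : (p + 1) * (2 * ℓ + 2 * ω.length + 1) + (2 * ℓ + 2 * ω.length + 1)
          = (p + 2) * (2 * ℓ + 2 * ω.length + 1) := by ring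
      have h3 : (p + 2) * (2 * ℓ + 2 * ω.length + 1) ≤
          (Q + 1) * (2 * ℓ + 2 * ω.length + 1) :=
        Nat.mul_le_mul_right _ (by omega)
      omega
  set s : Finset (Fin Q × (Fin ((Q + 1) * (2 * ℓ + 2 * ω.length + 1)) → A)) :=
    Finset.univ.filter (fun pw => wmemN X pw.2 ∧ ofree ω pw.2) with hs
  have hL : ∑ pw ∈ s, Real.exp (PhiN φ ((Q + 1) * (2 * ℓ + 2 * ω.length + 1)) pw.2)
      = (Q : ℝ) * Ys X φ ω ((Q + 1) * (2 * ℓ + 2 * ω.length + 1)) := by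
    rw [hs, Finset.sum_filter, Fintype.sum_prod_type]
    have hinner : ∀ p : Fin Q,
        (∑ w : Fin ((Q + 1) * (2 * ℓ + 2 * ω.length + 1)) → A,
          if wmemN X (p, w).2 ∧ ofree ω (p, w).2 then
            Real.exp (PhiN φ ((Q + 1) * (2 * ℓ + 2 * ω.length + 1)) (p, w).2) else 0)
        = Ys X φ ω ((Q + 1) * (2 * ℓ + 2 * ω.length + 1)) := by
      intro p
      rw [Ys]
    rw [Finset.sum_congr rfl fun p _ => hinner p, Finset.sum_const, Finset.card_univ,
      Fintype.card_fin, nsmul_eq_mul]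
  rw [← hL, Zs, Finset.mul_sum]
  refine sum_inj_le s
    (fun pw => wrdN (encZA X ℓ ω ((pw.1.1 + 1) * (2 * ℓ + 2 * ω.length + 1))
      ((Q + 1) * (2 * ℓ + 2 * ω.length + 1)) pw.2)
      ((Q + 1) * (2 * ℓ + 2 * ω.length + 1) + (2 * ℓ + ω.length)))
    ?_ _ _ (fun y => by split_ifs <;> positivity) ?_
  · -- injectivity
    intro x hx y hy hexy
    rw [hs, Finset.mem_filter] at hx hy
    obtain ⟨hxm, hxf⟩ := hx.2
    obtain ⟨hym, hyf⟩ := hy.2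
    have hbx := hsite x.1.1 x.1.2
    have hby := hsite y.1.1 y.1.2
    have hsep : (x.1.1 + 1) * (2 * ℓ + 2 * ω.length + 1) + (2 * ℓ + 2 * ω.length + 1) ≤
          (y.1.1 + 1) * (2 * ℓ + 2 * ω.length + 1) ∨
        (y.1.1 + 1) * (2 * ℓ + 2 * ω.length + 1) + (2 * ℓ + 2 * ω.length + 1) ≤
          (x.1.1 + 1) * (2 * ℓ + 2 * ω.length + 1) ∨
        (x.1.1 + 1) * (2 * ℓ + 2 * ω.length + 1) =
          (y.1.1 + 1) * (2 * ℓ + 2 * ω.length + 1) := by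
      rcases Nat.lt_trichotomy x.1.1 y.1.1 with h | h | h
      · left
        have h2 : (x.1.1 + 1) * (2 * ℓ + 2 * ω.length + 1) + (2 * ℓ + 2 * ω.length + 1)
            = (x.1.1 + 2) * (2 * ℓ + 2 * ω.length + 1) := by ring
        rw [h2]
        exact Nat.mul_le_mul_right _ (by omega)
      · right; right; rw [h]
      · right; left
        have h2 : (y.1.1 + 1) * (2 * ℓ + 2 * ω.length + 1) + (2 * ℓ + 2 * ω.length + 1)
            = (y.1.1 + 2) * (2 * ℓ + 2 * ω.length + 1) := by ring
        rw [h2]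
        exact Nat.mul_le_mul_right _ (by omega)
    obtain ⟨hspeq, hweq⟩ := encZA_inj hX hspec ω hg hωmem hbx.1 hby.1 hbx.2 hby.2
      hsep x.2 y.2 hxm hym hxf hyf hexy
    have hpeq : x.1 = y.1 := by
      have := Nat.eq_of_mul_eq_mul_right
        (show 0 < 2 * ℓ + 2 * ω.length + 1 by omega) hspeq
      exact Fin.ext (by omega)
    exact Prod.ext hpeq hweq
  · -- weights
    intro pw hpw
    rw [hs, Finset.mem_filter] at hpw
    obtain ⟨hm, hf⟩ := hpw.2
    have hb := hsite pw.1.1 pw.1.2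
    have hfacts := encZA_facts hX hspec ω hg hωmem hb.1 hb.2 pw.2 hm
    rw [if_pos (wrdN_mem hfacts.1 _)]
    rw [← Real.exp_add, Real.exp_le_exp]
    have := encZA_phi hX hspec hKb hK0 hVb hV0 ω hg hωmem hb.1 hb.2 pw.2 hm
    linarith
/-! #### Magic word -/

lemma inLang_prefix {X : Set (ℕ → A)} (y x : List A) (h : inLang X (y ++ x)) :
    inLang X y := by
  obtain ⟨a, ha, hv⟩ := h
  refine ⟨a, ha, fun i => ?_⟩
  have h2 := hv ⟨i.1, by rw [List.length_append]; have := i.2; omega⟩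
  simp only [List.get_eq_getElem] at h2 ⊢
  rw [List.getElem_append_left i.2] at h2
  exact h2

lemma inLang_suffix {X : Set (ℕ → A)} (hX : IsSubshift X) (y x : List A)
    (h : inLang X (y ++ x)) : inLang X x := by
  obtain ⟨a, ha, hv⟩ := h
  refine ⟨shift^[y.length] a, shift_iter_mem hX _ ha, fun i => ?_⟩
  rw [shift_iter_apply]
  have h2 := hv ⟨y.length + i.1, by rw [List.length_append]; have := i.2; omega⟩
  simp only [List.get_eq_getElem] at h2 ⊢
  rw [List.getElem_append_right (by omega : y.length ≤ y.length + i.1)] at h2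
  simp only [Nat.add_sub_cancel_left] at h2
  rw [show i.1 + y.length = y.length + i.1 from by omega]
  exact h2

lemma exists_magic {X : Set (ℕ → A)} (hX : IsSubshift X) (hXne : X.Nonempty)
    (hsofic : IsSofic X) :
    ∃ ω : List A, 1 ≤ ω.length ∧ inLang X ω ∧
      ∀ u u' : List A, inLang X (u ++ ω) → inLang X (ω ++ u') →
        inLang X ((u ++ ω) ++ u') := by
  obtain ⟨a₀, ha₀⟩ := hXne
  have hnil : inLang X ([] : List A) := ⟨a₀, ha₀, fun i => absurd i.2 (by simp)⟩
  have hFne : {S : Set (List A) | ∃ w, inLang X w ∧ S = follower X w}.Nonempty :=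
    ⟨follower X [], [], hnil, rfl⟩
  obtain ⟨S, hSF, hmin⟩ : ∃ S ∈ {S : Set (List A) | ∃ w, inLang X w ∧ S = follower X w},
      ∀ T ∈ {S : Set (List A) | ∃ w, inLang X w ∧ S = follower X w}, id T ≤ id S → id S = id T := by
    obtain ⟨S, hS⟩ := hsofic.exists_minimal hFne
    exact ⟨S, hS.1, fun T hT h => (hS.eq_of_le hT h).symm⟩
  obtain ⟨w₀, hw₀L, rfl⟩ := hSF
  have magic₀ : ∀ u u' : List A, inLang X (u ++ w₀) → inLang X (w₀ ++ u') →
      inLang X ((u ++ w₀) ++ u') := by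
    intro u u' hu hu'
    have hsub : follower X (u ++ w₀) ⊆ follower X w₀ := by
      intro x hx
      have hx2 : inLang X (u ++ (w₀ ++ x)) := by
        rw [← List.append_assoc]; exact hx
      exact inLang_suffix hX u (w₀ ++ x) hx2
    have heq : follower X w₀ = follower X (u ++ w₀) :=
      hmin _ ⟨u ++ w₀, hu, rfl⟩ hsub
    have h3 : u' ∈ follower X (u ++ w₀) := by rw [← heq]; exact hu'
    exact h3
  obtain ⟨aw, hawX, hawv⟩ := hw₀L
  have hx1 : inLang X (w₀ ++ [aw w₀.length]) := by
    refine ⟨aw, hawX, fun i => ?_⟩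
    have hi : i.1 < w₀.length + 1 := by
      have h0 := i.2
      simp only [List.length_append, List.length_singleton] at h0
      exact h0
    simp only [List.get_eq_getElem]
    by_cases h : i.1 < w₀.length
    · have h4 := hawv ⟨i.1, h⟩
      simp only [List.get_eq_getElem] at h4
      rw [List.getElem_append_left h]
      exact h4
    · have hieq : i.1 = w₀.length := by omega
      simp only [hieq]
      rw [List.getElem_concat_length]
      rfl
  refine ⟨w₀ ++ [aw w₀.length], by simp, hx1, ?_⟩
  intro u u' hu hu'
  have h1 : inLang X (u ++ w₀) := by
    apply inLang_prefix (u ++ w₀) [aw w₀.length]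
    rw [List.append_assoc]
    exact hu
  have h2 : inLang X (w₀ ++ ([aw w₀.length] ++ u')) := by
    rw [← List.append_assoc]
    exact hu'
  have h3 := magic₀ u ([aw w₀.length] ++ u') h1 h2
  rw [show (u ++ w₀) ++ ([aw w₀.length] ++ u') = (u ++ (w₀ ++ [aw w₀.length])) ++ u'
    from by simp [List.append_assoc]] at h3
  exact h3
/-! #### Boundary words are ω-free in the interior -/

def midw {m : ℕ} (w : Fin (m + 2) → A) : Fin m → A :=
  fun j => w ⟨j.1 + 1, by have := j.2; omega⟩

lemma boundary_good {X : Set (ℕ → A)} (hX : IsSubshift X) {ω : List A}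
    (hmagic : ∀ u u' : List A, inLang X (u ++ ω) → inLang X (ω ++ u') →
      inLang X ((u ++ ω) ++ u'))
    {m : ℕ} (w : Fin (m + 2) → A)
    (hwB : w ∈ lang (FTA X m) (m + 1)) (hwnot : w ∉ lang X (m + 1)) :
    wmemN X (midw w) ∧ ofree ω (midw w) := by
  obtain ⟨a, haF, hav⟩ := hwB
  have hav' : ∀ i, ∀ h : i < m + 2, a i = w ⟨i, h⟩ := fun i h => congrFun hav ⟨i, h⟩
  have hwin : ∀ j : ℕ, ∃ b ∈ X, ∀ t, t ≤ m → b t = a (j + t) := by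
    intro j
    obtain ⟨b, hbX, hbv⟩ := haF j
    exact ⟨b, hbX, fun t ht => congrFun hbv ⟨t, by omega⟩⟩
  constructor
  · obtain ⟨b, hbX, hbv⟩ := hwin 1
    refine ⟨b, hbX, fun i h => ?_⟩
    rw [hbv i (by omega)]
    rw [hav' (1 + i) (by omega)]
    show w _ = w ⟨i + 1, by omega⟩
    exact wapp w _ _ (by omega)
  · intro i hig hocc
    have hocca : ∀ j, ∀ hj : j < ω.length, a (i + 1 + j) = ω[j] := by
      intro j hj
      have h2 := hocc j hj
      rw [wext_lt _ (show i + j < m by omega)] at h2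
      simp only [List.get_eq_getElem] at h2
      rw [hav' (i + 1 + j) (by omega)]
      rw [← h2]
      show w ⟨i + 1 + j, by omega⟩ = w ⟨i + j + 1, by omega⟩
      exact wapp w _ _ (by omega)
    set U : List A := List.ofFn (fun t : Fin (i + 1) => a t.1) with hUdef
    set Sf : List A := List.ofFn
      (fun t : Fin (m + 1 - i - ω.length) => a (i + 1 + ω.length + t.1)) with hSdef
    have hUl : U.length = i + 1 := by rw [hUdef, List.length_ofFn]
    have hSl : Sf.length = m + 1 - i - ω.length := by rw [hSdef, List.length_ofFn]
    have hUL : inLang X (U ++ ω) := by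
      obtain ⟨b, hbX, hbv⟩ := hwin 0
      refine ⟨b, hbX, fun t => ?_⟩
      have ht : t.1 < i + 1 + ω.length := by
        have h0 := t.2
        simp only [List.length_append, hUl] at h0
        omega
      simp only [List.get_eq_getElem]
      rw [hbv t.1 (by omega), show (0 : ℕ) + t.1 = t.1 from by omega]
      by_cases h1 : t.1 < i + 1
      · rw [List.getElem_append_left (by omega : t.1 < U.length)]
        simp only [hUdef, List.getElem_ofFn]
      · rw [List.getElem_append_right (by omega : U.length ≤ t.1)]
        have h3 := hocca (t.1 - (i + 1)) (by omega)
        rw [show i + 1 + (t.1 - (i + 1)) = t.1 from by omega] at h3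
        simp only [hUl]
        exact h3
    have hSfL : inLang X (ω ++ Sf) := by
      obtain ⟨b, hbX, hbv⟩ := hwin (i + 1)
      refine ⟨b, hbX, fun t => ?_⟩
      have ht : t.1 < ω.length + (m + 1 - i - ω.length) := by
        have h0 := t.2
        simp only [List.length_append, hSl] at h0
        omega
      simp only [List.get_eq_getElem]
      rw [hbv t.1 (by omega)]
      by_cases h1 : t.1 < ω.length
      · rw [List.getElem_append_left (h1 : t.1 < ω.length)]
        exact (hocca t.1 h1).symm.trans rfl |>.symm ▸ (hocca t.1 h1)
      · rw [List.getElem_append_right (by omega : ω.length ≤ t.1)]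
        simp only [hSdef, List.getElem_ofFn]
        exact congrArg a (by omega)
    have hfull := hmagic U Sf hUL hSfL
    apply hwnot
    obtain ⟨b₂, hb₂X, hb₂v⟩ := hfull
    have hlen : ((U ++ ω) ++ Sf).length = m + 2 := by
      rw [List.length_append, List.length_append, hUl, hSl]
      omega
    have hval : ∀ t, ∀ ht : t < m + 2,
        ((U ++ ω) ++ Sf)[t]'(by rw [hlen]; exact ht) = a t := by
      intro t ht
      by_cases h1 : t < i + 1
      · rw [List.getElem_append_left
          (show t < (U ++ ω).length by rw [List.length_append, hUl]; omega)]
        rw [List.getElem_append_left (show t < U.length by omega)]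
        simp only [hUdef, List.getElem_ofFn]
      · by_cases h2 : t < i + 1 + ω.length
        · rw [List.getElem_append_left
            (show t < (U ++ ω).length by rw [List.length_append, hUl]; omega)]
          rw [List.getElem_append_right (show U.length ≤ t by omega)]
          have h3 := hocca (t - (i + 1)) (by omega)
          rw [show i + 1 + (t - (i + 1)) = t from by omega] at h3
          simp only [hUl]
          exact h3.symm
        · rw [List.getElem_append_right
            (show (U ++ ω).length ≤ t by rw [List.length_append, hUl]; omega)]
          simp only [hSdef, List.getElem_ofFn]
          refine congrArg a ?_
          simp only [List.length_append, hUl]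
          omega
    refine ⟨b₂, hb₂X, funext fun t => ?_⟩
    show b₂ t.1 = w t
    have h5 := hb₂v ⟨t.1, by rw [hlen]; exact t.2⟩
    simp only [List.get_eq_getElem] at h5
    rw [hval t.1 t.2] at h5
    rw [h5]
    exact hav' t.1 t.2
/-! #### Stripping the two boundary letters -/

def midEquiv (m : ℕ) : (Fin (m + 2) → A) ≃ ((Fin m → A) × (Fin 2 → A)) where
  toFun w := (midw w, fun b => if b.1 = 0 then w ⟨0, by omega⟩ else w ⟨m + 1, by omega⟩)
  invFun ue := fun i =>
    if h0 : i.1 = 0 then ue.2 0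
    else if hm : i.1 ≤ m then ue.1 ⟨i.1 - 1, by omega⟩ else ue.2 1
  left_inv := by
    intro w
    funext i
    show (if h0 : i.1 = 0 then _ else if hm : i.1 ≤ m then midw w ⟨i.1 - 1, _⟩ else _) = w i
    by_cases h0 : i.1 = 0
    · rw [dif_pos h0]
      show (if ((0 : Fin 2).1 = 0) then w ⟨0, by omega⟩ else w ⟨m + 1, by omega⟩) = w i
      rw [if_pos (show ((0 : Fin 2).1 = 0) by simp)]
      exact wapp w _ _ h0.symm
    · rw [dif_neg h0]
      by_cases hm : i.1 ≤ m
      · rw [dif_pos hm]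
        show w ⟨i.1 - 1 + 1, _⟩ = w i
        exact wapp w _ _ (by omega)
      · rw [dif_neg hm]
        show (if ((1 : Fin 2).1 = 0) then w ⟨0, by omega⟩ else w ⟨m + 1, by omega⟩) = w i
        rw [if_neg (by simp)]
        exact wapp w _ _ (by have := i.2; omega)
  right_inv := by
    intro ue
    rw [Prod.mk.injEq]
    constructor
    · funext j
      show (if h0 : (j.1 + 1) = 0 then ue.2 0
        else if hm : j.1 + 1 ≤ m then ue.1 ⟨j.1 + 1 - 1, by omega⟩ else ue.2 1) = ue.1 j
      rw [dif_neg (by omega), dif_pos (by have := j.2; omega)]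
      show ue.1 ⟨j.1 + 1 - 1, _⟩ = ue.1 j
      exact wapp ue.1 _ _ (by omega)
    · funext b
      by_cases hb : b.1 = 0
      · rw [if_pos hb]
        show (if h0 : ((0 : ℕ) = 0) then ue.2 0 else _) = ue.2 b
        rw [dif_pos rfl]
        refine congrArg ue.2 (Fin.ext ?_)
        simp [hb.symm]
        omega
      · rw [if_neg hb]
        show (if h0 : ((m + 1 : ℕ) = 0) then _
          else if hm : m + 1 ≤ m then _ else ue.2 1) = ue.2 b
        rw [dif_neg (by omega), dif_neg (by omega)]
        refine congrArg ue.2 (Fin.ext ?_)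
        have := b.2
        rw [Fin.val_one]
        omega

lemma sum_mid (m : ℕ) (H : (Fin m → A) → ℝ) :
    (∑ w : Fin (m + 2) → A, H (midw w)) =
      (Fintype.card A : ℝ) ^ 2 * ∑ u : Fin m → A, H u := by
  rw [← Equiv.sum_comp (midEquiv (A := A) m).symm (fun w => H (midw w)),
    Fintype.sum_prod_type]
  have hmid : ∀ ue : (Fin m → A) × (Fin 2 → A),
      midw ((midEquiv (A := A) m).symm ue) = ue.1 := by
    intro ue
    have h := (midEquiv (A := A) m).right_inv ue
    exact congrArg Prod.fst h
  calc ∑ u : Fin m → A, ∑ e : Fin 2 → A, H (midw ((midEquiv (A := A) m).symm (u, e)))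
      = ∑ u : Fin m → A, ∑ _e : Fin 2 → A, H u :=
        Finset.sum_congr rfl fun u _ => Finset.sum_congr rfl fun e _ => by rw [hmid (u, e)]
    _ = ∑ u : Fin m → A, (Fintype.card A : ℝ) ^ 2 * H u := by
        refine Finset.sum_congr rfl fun u _ => ?_
        rw [Finset.sum_const, nsmul_eq_mul, card_words (A := A) 2]
    _ = (Fintype.card A : ℝ) ^ 2 * ∑ u : Fin m → A, H u := by rw [Finset.mul_sum]

lemma phiN_strip {φ : (ℕ → A) → ℝ} {K : ℝ} (hKb : ∀ a, |φ a| ≤ K)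
    (m : ℕ) (w : Fin (m + 2) → A) :
    PhiN φ (m + 2) w ≤ 2 * K + PhiN φ m (midw w) := by
  refine csSup_le ((cylN_nonempty w).image _) ?_
  rintro x ⟨a, ha, rfl⟩
  have e1 : birkN φ (m + 2) a =
      birkN φ 1 a + (birkN φ m (shift^[1] a) + birkN φ 1 (shift^[m] (shift^[1] a))) := by
    rw [show m + 2 = 1 + (m + 1) from by omega, birkN_add, birkN_add]
  have h1 := birkN_le hKb 1 a
  have h3 := birkN_le hKb 1 (shift^[m] (shift^[1] a))
  have hcast : ((1 : ℕ) : ℝ) * K = K := by norm_num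
  rw [hcast] at h1 h3
  have hcyl : shift^[1] a ∈ cylN m (midw w) := by
    intro i h
    rw [shift_iter_apply, ha (i + 1) (by omega)]
    show w _ = w ⟨i + 1, by omega⟩
    exact wapp w _ _ rfl
  have h2 : birkN φ m (shift^[1] a) ≤ PhiN φ m (midw w) := le_phiN hKb hcyl
  rw [e1]
  linarith

/-! #### Conversions to the statement's objects -/

lemma birkWord_eq (φ : (ℕ → A) → ℝ) {n : ℕ} (w : Fin (n + 1) → A) :
    birkWord φ w = PhiN φ (n + 1) w := by
  have hc : cylW w = cylN (n + 1) w := by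
    ext b
    constructor
    · intro hb i h; exact hb ⟨i, h⟩
    · intro hb i; exact hb i.1 i.2
  rw [birkWord, PhiN, hc]
  rfl

lemma lang_FTA_of_wmem {X : Set (ℕ → A)} (hX : IsSubshift X) {m : ℕ}
    (w : Fin (m + 2) → A) (hw : wmemN X w) : w ∈ lang (FTA X m) (m + 1) := by
  obtain ⟨a, haX, hav⟩ := hw
  refine ⟨a, ?_, funext fun i => ?_⟩
  · intro j
    refine ⟨shift^[j] a, shift_iter_mem hX j haX, funext fun i => ?_⟩
    show (shift^[j] a) i.1 = a (j + i.1)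
    rw [shift_iter_apply]
    exact congrArg a (by omega)
  · show a i.1 = w i
    rw [hav i.1 i.2]

lemma wmem_of_lang {X : Set (ℕ → A)} {n : ℕ} {w : Fin (n + 1) → A}
    (h : w ∈ lang X n) : wmemN X w := (wmemN_iff_lang w).1 h
set_option maxHeartbeats 1000000

/-- the weighted number of forbidden extensions
`∂L_m = L_{m+1}(X_m) \ L_{m+1}(X)` is exponentially small compared to the
whole weighted language `L_{m+1}(X_m)`. -/
theorem boundary_language_exponentially_small
    (X : Set (ℕ → A)) (hX : IsSubshift X) (hsofic : IsSofic X)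
    (ℓ : ℕ) (hℓ : 1 ≤ ℓ) (hspec : Specified X ℓ)
    (φ : (ℕ → A) → ℝ) (C θ : ℝ) (hC : 0 < C) (hθ : θ ∈ Set.Ioo (0 : ℝ) 1)
    (hH : HolderPot φ C θ) :
    ∃ (θ₀ : ℝ) (m₀ : ℕ), θ₀ ∈ Set.Ioo (0 : ℝ) 1 ∧
      ∀ m, m₀ ≤ m →
        ∑ w ∈ langFinset (FTA X m) (m + 1) \ langFinset X (m + 1),
            Real.exp (birkWord φ w) ≤
          θ₀ ^ m *
            ∑ w ∈ langFinset (FTA X m) (m + 1), Real.exp (birkWord φ w) := by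
  classical
  rcases Set.eq_empty_or_nonempty X with hXe | hXne
  · refine ⟨1/2, 1, ⟨by norm_num, by norm_num⟩, ?_⟩
    intro m hm
    have hempty : langFinset (A := A) (FTA X m) (m + 1) = ∅ := by
      rw [Finset.eq_empty_iff_forall_notMem]
      intro w hw
      rw [langFinset, Finset.mem_filter] at hw
      obtain ⟨a, haF, -⟩ := hw.2
      obtain ⟨b, hbX, -⟩ := haF 0
      rw [hXe] at hbX
      exact hbX
    rw [hempty]
    simp
  · obtain ⟨a₀, ha₀X⟩ := hXne
    -- the uniform bound K
    set M : ℝ := Finset.univ.sup' Finset.univ_nonempty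
      (fun x : A => |φ (fun n => if n = 0 then x else a₀ n)|) with hMdef
    have hM0 : 0 ≤ M := by
      rw [hMdef]
      exact le_trans (abs_nonneg (φ (fun n => if n = 0 then a₀ 0 else a₀ n)))
        (Finset.le_sup' (fun x : A => |φ (fun n => if n = 0 then x else a₀ n)|)
          (Finset.mem_univ (a₀ 0)))
    set K := C + M with hKdef
    have hK0 : 0 ≤ K := by rw [hKdef]; linarith [hC.le]
    have hKb : ∀ a, |φ a| ≤ K := by
      intro a
      have hag : ∀ i, i ≤ 0 → a i = (fun n => if n = 0 then a 0 else a₀ n) i := by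
        intro i hi
        have hi0 : i = 0 := by omega
        subst hi0
        simp
      have h1 := hH 0 a (fun n => if n = 0 then a 0 else a₀ n) hag
      rw [pow_zero, mul_one] at h1
      have h2 : |φ (fun n => if n = 0 then a 0 else a₀ n)| ≤ M := by
        rw [hMdef]
        exact Finset.le_sup' (fun x : A => |φ (fun n => if n = 0 then x else a₀ n)|)
          (Finset.mem_univ (a 0))
      have h4 : |φ a| ≤ |φ a - φ (fun n => if n = 0 then a 0 else a₀ n)| +
          |φ (fun n => if n = 0 then a 0 else a₀ n)| := by
        have h5 := abs_add_le (φ a - φ (fun n => if n = 0 then a 0 else a₀ n))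
          (φ (fun n => if n = 0 then a 0 else a₀ n))
        simpa using h5
      rw [hKdef]
      linarith
    -- the variation bound V
    have h1θ : 0 < 1 - θ := by have := hθ.2; linarith
    set V := C / (1 - θ) with hVdef
    have hV0 : 0 ≤ V := le_of_lt (div_pos hC h1θ)
    have hVb : ∀ n a b, (∀ i, i < n → a i = b i) → |birkN φ n a - birkN φ n b| ≤ V := by
      intro n a b hab
      have hterm : ∀ i ∈ Finset.range n,
          |φ (shift^[i] a) - φ (shift^[i] b)| ≤ C * θ ^ (n - 1 - i) := by
        intro i hi
        rw [Finset.mem_range] at hi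
        refine hH (n - 1 - i) _ _ ?_
        intro tt htt
        rw [shift_iter_apply, shift_iter_apply]
        exact hab (tt + i) (by omega)
      calc |birkN φ n a - birkN φ n b|
          = |∑ i ∈ Finset.range n, (φ (shift^[i] a) - φ (shift^[i] b))| := by
            simp only [birkN]
            rw [← Finset.sum_sub_distrib]
        _ ≤ ∑ i ∈ Finset.range n, |φ (shift^[i] a) - φ (shift^[i] b)| :=
            Finset.abs_sum_le_sum_abs _ _
        _ ≤ ∑ i ∈ Finset.range n, C * θ ^ (n - 1 - i) := Finset.sum_le_sum hterm
        _ = C * ∑ i ∈ Finset.range n, θ ^ (n - 1 - i) := by rw [Finset.mul_sum]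
        _ = C * ∑ i ∈ Finset.range n, θ ^ i := by
            rw [Finset.sum_range_reflect (fun j => θ ^ j) n]
        _ ≤ C * (1 / (1 - θ)) := by
            refine mul_le_mul_of_nonneg_left ?_ hC.le
            rw [geom_sum_eq (ne_of_lt hθ.2) n]
            have e : (θ ^ n - 1) / (θ - 1) = (1 - θ ^ n) / (1 - θ) := by
              rw [← neg_div_neg_eq]
              congr 1 <;> ring
            rw [e]
            have hp : (0:ℝ) ≤ θ ^ n := pow_nonneg hθ.1.le n
            rw [div_le_div_iff₀ h1θ h1θ]
            nlinarith
        _ = V := by rw [hVdef]; ring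
    -- the magic word
    obtain ⟨ω, hg1, hωL, hmagic⟩ := exists_magic hX ⟨a₀, ha₀X⟩ hsofic
    have hωmem : wmemN X (fun i : Fin ω.length => ω.get i) := by
      obtain ⟨aa, haa, hv⟩ := hωL
      exact ⟨aa, haa, fun i h => hv ⟨i, h⟩⟩
    have hcA1 : (1 : ℝ) ≤ (Fintype.card A : ℝ) := by exact_mod_cast Fintype.card_pos
    have hcA0 : (0 : ℝ) < (Fintype.card A : ℝ) := by linarith
    -- constants
    set Dins : ℝ := Real.exp (2 * V + (2 * (ℓ : ℝ) + (ω.length : ℝ)) * K) *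
      ((Fintype.card A : ℝ) ^ (2 * ℓ + ω.length) *
        Real.exp (((2 * ℓ + ω.length : ℕ) : ℝ) * K)) with hDinsdef
    have hDins0 : 0 < Dins := by rw [hDinsdef]; positivity
    set Dtot : ℝ := Dins * Real.exp (2 * V + (ℓ : ℝ) * K) *
      ((Fintype.card A : ℝ) ^ ℓ * Real.exp ((ℓ : ℝ) * K)) with hDtotdef
    have hDtot0 : 0 < Dtot := by rw [hDtotdef]; positivity
    set Q : ℕ := ⌈Dtot * Real.exp 1⌉₊ + 1 with hQdef
    have hQpos : (0 : ℝ) < (Q : ℝ) := by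
      have : 0 < Q := by rw [hQdef]; omega
      exact_mod_cast this
    have hQe : Dtot / (Q : ℝ) ≤ Real.exp (-1) := by
      rw [div_le_iff₀ hQpos]
      have h1 : Dtot * Real.exp 1 ≤ (Q : ℝ) := by
        have h2 := Nat.le_ceil (Dtot * Real.exp 1)
        have h3 : ((⌈Dtot * Real.exp 1⌉₊ : ℕ) : ℝ) ≤ (Q : ℝ) := by
          rw [hQdef]; push_cast; linarith
        linarith
      have h4 : Real.exp (-1) * (Dtot * Real.exp 1) = Dtot := by
        rw [show Real.exp (-1) * (Dtot * Real.exp 1) = Dtot * (Real.exp (-1) * Real.exp 1)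
          from by ring, ← Real.exp_add]
        norm_num
      have h5 := mul_le_mul_of_nonneg_left h1 (Real.exp_pos (-1 : ℝ)).le
      rw [h4] at h5
      linarith
    set r : ℕ := (Q + 1) * (2 * ℓ + 2 * ω.length + 1) with hrdef
    have hr1 : 1 ≤ r := by
      rw [hrdef]
      have := Nat.mul_pos (show 0 < Q + 1 by omega)
        (show 0 < 2 * ℓ + 2 * ω.length + 1 by omega)
      omega
    have hrR : (1 : ℝ) ≤ (r : ℝ) := by exact_mod_cast hr1
    have hr0 : (0 : ℝ) < (r : ℝ) := by linarith
    -- per-block estimate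
    have hblock : Ys X φ ω r ≤ Dins / (Q : ℝ) * Zs X φ r := by
      have h1 := insertion_bound hX hspec hKb hK0 hVb hV0 ω hg1 hωmem Q
      rw [← hrdef] at h1
      have h2 := Zs_drop (X := X) (φ := φ) hX hKb hVb r (2 * ℓ + ω.length)
      have h3 : (Q : ℝ) * Ys X φ ω r ≤ Dins * Zs X φ r := by
        calc (Q : ℝ) * Ys X φ ω r
            ≤ Real.exp (2 * V + (2 * (ℓ : ℝ) + (ω.length : ℝ)) * K) *
              Zs X φ (r + (2 * ℓ + ω.length)) := h1
          _ ≤ Real.exp (2 * V + (2 * (ℓ : ℝ) + (ω.length : ℝ)) * K) *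
              (Zs X φ r * ((Fintype.card A : ℝ) ^ (2 * ℓ + ω.length) *
                Real.exp (((2 * ℓ + ω.length : ℕ) : ℝ) * K))) :=
            mul_le_mul_of_nonneg_left h2 (Real.exp_pos _).le
          _ = Dins * Zs X φ r := by rw [hDinsdef]; ring
      rw [div_mul_eq_mul_div, le_div_iff₀ hQpos]
      calc Ys X φ ω r * (Q : ℝ) = (Q : ℝ) * Ys X φ ω r := by ring
        _ ≤ Dins * Zs X φ r := h3
    -- θ₀ and m₀
    set θ₀ : ℝ := Real.exp (-(1 / (2 * (r : ℝ)))) with hθ₀def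
    have hθ₀mem : θ₀ ∈ Set.Ioo (0 : ℝ) 1 := by
      constructor
      · rw [hθ₀def]; exact Real.exp_pos _
      · rw [hθ₀def, Real.exp_lt_one_iff]
        have : 0 < 1 / (2 * (r : ℝ)) := by positivity
        linarith
    set Dfin : ℝ := (Fintype.card A : ℝ) ^ 2 * Real.exp (2 * K) with hDfindef
    have hDfin0 : 0 < Dfin := by rw [hDfindef]; positivity
    set m₀ : ℕ := 2 * r * (⌈|Real.log Dfin|⌉₊ + 2) + 2 * r + 1 with hm₀def
    clear_value m₀ Dfin θ₀ r Q Dtot Dins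
    refine ⟨θ₀, m₀, hθ₀mem, ?_⟩
    intro m hm
    have hm2r : 2 * r + 1 ≤ m := by
      have h7 : 2 * r + 1 ≤ m₀ := by rw [hm₀def]; omega
      omega
    -- decomposition of m into blocks
    obtain ⟨s, t, hst, ht1, htr⟩ : ∃ s t, s * r + t = m ∧ 1 ≤ t ∧ t ≤ r := by
      refine ⟨(m - 1) / r, (m - 1) % r + 1, ?_, by omega, ?_⟩
      · have h2 := Nat.div_add_mod (m - 1) r
        have h3 : (m - 1) / r * r = r * ((m - 1) / r) := Nat.mul_comm _ _
        omega
      · have := Nat.mod_lt (m - 1) (show 0 < r by omega)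
        omega
    have hs2 : 2 ≤ s := by
      by_contra hcon
      push_neg at hcon
      have h5 : s * r ≤ 1 * r := Nat.mul_le_mul_right r (by omega)
      have h6 : 1 * r = r := by ring
      omega
    have hsl2 : 2 ≤ s * ℓ := by
      have h8 := Nat.mul_le_mul hs2 hℓ
      omega
    -- conversions to the statement's sums
    have hBle : (∑ w ∈ langFinset (FTA X m) (m + 1) \ langFinset X (m + 1),
        Real.exp (birkWord φ w)) =
        ∑ w : Fin (m + 2) → A,
          (if w ∈ lang (FTA X m) (m + 1) ∧ ¬ w ∈ lang X (m + 1) then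
            Real.exp (PhiN φ (m + 2) w) else 0) := by
      have hset : langFinset (FTA X m) (m + 1) \ langFinset X (m + 1) =
          Finset.filter
            (fun w : Fin (m + 2) → A =>
              w ∈ lang (FTA X m) (m + 1) ∧ ¬ w ∈ lang X (m + 1)) Finset.univ := by
        ext w
        simp [langFinset]
      rw [hset, Finset.sum_filter]
      refine Finset.sum_congr rfl fun w _ => ?_
      by_cases hP : w ∈ lang (FTA X m) (m + 1) ∧ ¬ w ∈ lang X (m + 1)
      · rw [if_pos hP, if_pos hP, birkWord_eq]
      · rw [if_neg hP, if_neg hP]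
    have hTconv : (∑ w ∈ langFinset (FTA X m) (m + 1), Real.exp (birkWord φ w)) =
        ∑ w : Fin (m + 2) → A,
          (if w ∈ lang (FTA X m) (m + 1) then Real.exp (PhiN φ (m + 2) w) else 0) := by
      rw [langFinset, Finset.sum_filter]
      refine Finset.sum_congr rfl fun w _ => ?_
      by_cases hP : w ∈ lang (FTA X m) (m + 1)
      · rw [if_pos hP, if_pos hP, birkWord_eq]
      · rw [if_neg hP, if_neg hP]
    have hTge : Zs X φ (m + 2) ≤
        ∑ w ∈ langFinset (FTA X m) (m + 1), Real.exp (birkWord φ w) := by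
      rw [hTconv, Zs]
      refine Finset.sum_le_sum fun w _ => ?_
      by_cases h : wmemN X w
      · rw [if_pos h, if_pos (lang_FTA_of_wmem hX w h)]
      · rw [if_neg h]; split_ifs <;> positivity
    -- strip the boundary letters
    have hstrip : (∑ w : Fin (m + 2) → A,
        (if w ∈ lang (FTA X m) (m + 1) ∧ ¬ w ∈ lang X (m + 1) then
          Real.exp (PhiN φ (m + 2) w) else 0)) ≤ Dfin * Ys X φ ω m := by
      have hterm : ∀ w : Fin (m + 2) → A,
          (if w ∈ lang (FTA X m) (m + 1) ∧ ¬ w ∈ lang X (m + 1) then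
            Real.exp (PhiN φ (m + 2) w) else 0) ≤
          Real.exp (2 * K) * (if wmemN X (midw w) ∧ ofree ω (midw w) then
            Real.exp (PhiN φ m (midw w)) else 0) := by
        intro w
        by_cases hP : w ∈ lang (FTA X m) (m + 1) ∧ ¬ w ∈ lang X (m + 1)
        · rw [if_pos hP, if_pos (boundary_good hX hmagic w hP.1 hP.2), ← Real.exp_add]
          exact Real.exp_le_exp.2 (phiN_strip hKb m w)
        · rw [if_neg hP]
          split_ifs <;> positivity
      calc (∑ w : Fin (m + 2) → A,
          (if w ∈ lang (FTA X m) (m + 1) ∧ ¬ w ∈ lang X (m + 1) then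
            Real.exp (PhiN φ (m + 2) w) else 0))
          ≤ ∑ w : Fin (m + 2) → A,
            Real.exp (2 * K) * (if wmemN X (midw w) ∧ ofree ω (midw w) then
              Real.exp (PhiN φ m (midw w)) else 0) :=
            Finset.sum_le_sum fun w _ => hterm w
        _ = Real.exp (2 * K) * ∑ w : Fin (m + 2) → A,
            (if wmemN X (midw w) ∧ ofree ω (midw w) then
              Real.exp (PhiN φ m (midw w)) else 0) := by rw [Finset.mul_sum]
        _ = Real.exp (2 * K) * ((Fintype.card A : ℝ) ^ 2 * Ys X φ ω m) := by
            rw [sum_mid m (fun u => if wmemN X u ∧ ofree ω u then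
              Real.exp (PhiN φ m u) else 0), Ys]
        _ = Dfin * Ys X φ ω m := by rw [hDfindef]; ring
    -- the middle chain
    have h1 : Ys X φ ω m ≤ (Ys X φ ω r) ^ s * Zs X φ t := by
      have h9 := Ys_blocks hX hKb hVb ω r s t
      rwa [hst] at h9
    have h2 : (Ys X φ ω r) ^ s ≤ (Dins / (Q : ℝ)) ^ s * (Zs X φ r) ^ s := by
      calc (Ys X φ ω r) ^ s ≤ (Dins / (Q : ℝ) * Zs X φ r) ^ s :=
            pow_le_pow_left₀ (Ys_nonneg X φ ω r) hblock s
        _ = (Dins / (Q : ℝ)) ^ s * (Zs X φ r) ^ s := mul_pow _ _ _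
    have h3 := Zs_glue_chain hX hspec hKb hK0 hVb hV0 r hr1 s t ht1
    have hidx : s * (r + ℓ) + t = (m + 2) + (s * ℓ - 2) := by
      have h4 : s * (r + ℓ) = s * r + s * ℓ := by ring
      omega
    have h5 : Zs X φ (s * (r + ℓ) + t) ≤ Zs X φ (m + 2) *
        ((Fintype.card A : ℝ) ^ (s * ℓ - 2) *
          Real.exp (((s * ℓ - 2 : ℕ) : ℝ) * K)) := by
      rw [hidx]
      exact Zs_drop hX hKb hVb (m + 2) (s * ℓ - 2)
    have h6 : (Fintype.card A : ℝ) ^ (s * ℓ - 2) *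
        Real.exp (((s * ℓ - 2 : ℕ) : ℝ) * K) ≤
        (Fintype.card A : ℝ) ^ (s * ℓ) * Real.exp (((s * ℓ : ℕ) : ℝ) * K) := by
      have e1 : (Fintype.card A : ℝ) ^ (s * ℓ - 2) ≤ (Fintype.card A : ℝ) ^ (s * ℓ) :=
        pow_le_pow_right₀ hcA1 (by omega)
      have e2 : Real.exp (((s * ℓ - 2 : ℕ) : ℝ) * K) ≤
          Real.exp (((s * ℓ : ℕ) : ℝ) * K) := by
        apply Real.exp_le_exp.2
        have e3 : ((s * ℓ - 2 : ℕ) : ℝ) ≤ ((s * ℓ : ℕ) : ℝ) := by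
          exact_mod_cast Nat.sub_le _ _
        exact mul_le_mul_of_nonneg_right e3 hK0
      exact mul_le_mul e1 e2 (Real.exp_pos _).le (by positivity)
    have hexp1 : Real.exp ((2 * V + (ℓ : ℝ) * K) * (s : ℝ)) =
        (Real.exp (2 * V + (ℓ : ℝ) * K)) ^ s := by
      rw [mul_comm, Real.exp_nat_mul]
    have hexp2 : (Fintype.card A : ℝ) ^ (s * ℓ) = ((Fintype.card A : ℝ) ^ ℓ) ^ s := by
      rw [mul_comm, pow_mul]
    have hexp3 : Real.exp (((s * ℓ : ℕ) : ℝ) * K) = (Real.exp ((ℓ : ℝ) * K)) ^ s := by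
      push_cast
      rw [show (s : ℝ) * (ℓ : ℝ) * K = (s : ℝ) * ((ℓ : ℝ) * K) from by ring,
        Real.exp_nat_mul]
    have hF : Dins / (Q : ℝ) * Real.exp (2 * V + (ℓ : ℝ) * K) *
        ((Fintype.card A : ℝ) ^ ℓ * Real.exp ((ℓ : ℝ) * K)) = Dtot / (Q : ℝ) := by
      rw [hDtotdef]
      ring
    have hYm : Ys X φ ω m ≤ (Dtot / (Q : ℝ)) ^ s * Zs X φ (m + 2) := by
      calc Ys X φ ω m ≤ (Ys X φ ω r) ^ s * Zs X φ t := h1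
        _ ≤ ((Dins / (Q : ℝ)) ^ s * (Zs X φ r) ^ s) * Zs X φ t :=
            mul_le_mul_of_nonneg_right h2 (Zs_nonneg X φ t)
        _ = (Dins / (Q : ℝ)) ^ s * ((Zs X φ r) ^ s * Zs X φ t) := by ring
        _ ≤ (Dins / (Q : ℝ)) ^ s * (Real.exp ((2 * V + (ℓ : ℝ) * K) * (s : ℝ)) *
            Zs X φ (s * (r + ℓ) + t)) :=
            mul_le_mul_of_nonneg_left h3 (by positivity)
        _ ≤ (Dins / (Q : ℝ)) ^ s * (Real.exp ((2 * V + (ℓ : ℝ) * K) * (s : ℝ)) *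
            (Zs X φ (m + 2) * ((Fintype.card A : ℝ) ^ (s * ℓ) *
              Real.exp (((s * ℓ : ℕ) : ℝ) * K)))) := by
            refine mul_le_mul_of_nonneg_left ?_ (by positivity)
            refine mul_le_mul_of_nonneg_left ?_ (Real.exp_pos _).le
            calc Zs X φ (s * (r + ℓ) + t) ≤ Zs X φ (m + 2) *
                ((Fintype.card A : ℝ) ^ (s * ℓ - 2) *
                  Real.exp (((s * ℓ - 2 : ℕ) : ℝ) * K)) := h5
              _ ≤ Zs X φ (m + 2) * ((Fintype.card A : ℝ) ^ (s * ℓ) *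
                  Real.exp (((s * ℓ : ℕ) : ℝ) * K)) :=
                mul_le_mul_of_nonneg_left h6 (Zs_nonneg X φ (m + 2))
        _ = (Dins / (Q : ℝ) * Real.exp (2 * V + (ℓ : ℝ) * K) *
            ((Fintype.card A : ℝ) ^ ℓ * Real.exp ((ℓ : ℝ) * K))) ^ s *
            Zs X φ (m + 2) := by
            rw [hexp1, hexp2, hexp3, mul_pow, mul_pow, mul_pow]
            ring
        _ = (Dtot / (Q : ℝ)) ^ s * Zs X φ (m + 2) := by rw [hF]
    -- the numeric estimate
    have hkey : Dfin * (Dtot / (Q : ℝ)) ^ s ≤ θ₀ ^ m := by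
      have hρ0 : (0 : ℝ) ≤ Dtot / (Q : ℝ) := by positivity
      have hθ₀m : θ₀ ^ m = Real.exp (-((m : ℝ) / (2 * (r : ℝ)))) := by
        rw [hθ₀def, ← Real.exp_nat_mul]
        congr 1
        ring
      calc Dfin * (Dtot / (Q : ℝ)) ^ s ≤ Dfin * (Real.exp (-1)) ^ s :=
            mul_le_mul_of_nonneg_left (pow_le_pow_left₀ hρ0 hQe s) hDfin0.le
        _ = Dfin * Real.exp (-(s : ℝ)) := by
            rw [← Real.exp_nat_mul, show (s : ℝ) * (-1) = -(s : ℝ) from by ring]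
        _ ≤ θ₀ ^ m := by
            rw [hθ₀m, show Dfin = Real.exp (Real.log Dfin) from
              (Real.exp_log hDfin0).symm, ← Real.exp_add]
            apply Real.exp_le_exp.2
            have hf1 : (m : ℝ) ≤ ((s : ℝ) + 1) * (r : ℝ) := by
              have h10 : m ≤ (s + 1) * r := by
                have h11 : (s + 1) * r = s * r + r := by ring
                omega
              exact_mod_cast h10
            have hf2 : 2 * (r : ℝ) * (|Real.log Dfin| + 2) + 2 * (r : ℝ) + 1 ≤ (m : ℝ) := by
              have h12 : (m₀ : ℝ) ≤ (m : ℝ) := by exact_mod_cast hm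
              rw [hm₀def] at h12
              push_cast at h12
              have h13 : |Real.log Dfin| ≤ (⌈|Real.log Dfin|⌉₊ : ℝ) := Nat.le_ceil _
              have h14 : 2 * (r : ℝ) * |Real.log Dfin| ≤
                  2 * (r : ℝ) * (⌈|Real.log Dfin|⌉₊ : ℝ) :=
                mul_le_mul_of_nonneg_left h13 (by positivity)
              linarith
            have hf3 : Real.log Dfin ≤ |Real.log Dfin| := le_abs_self _
            have h8 : (m : ℝ) / (2 * (r : ℝ)) ≤ (s : ℝ) - |Real.log Dfin| - 1 := by
              rw [div_le_iff₀ (by positivity)]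
              linarith [hf1, hf2]
            linarith
    -- conclusion
    rw [hBle]
    calc (∑ w : Fin (m + 2) → A,
        (if w ∈ lang (FTA X m) (m + 1) ∧ ¬ w ∈ lang X (m + 1) then
          Real.exp (PhiN φ (m + 2) w) else 0))
        ≤ Dfin * Ys X φ ω m := hstrip
      _ ≤ Dfin * ((Dtot / (Q : ℝ)) ^ s * Zs X φ (m + 2)) :=
          mul_le_mul_of_nonneg_left hYm hDfin0.le
      _ = (Dfin * (Dtot / (Q : ℝ)) ^ s) * Zs X φ (m + 2) := by ring
      _ ≤ θ₀ ^ m * Zs X φ (m + 2) :=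
          mul_le_mul_of_nonneg_right hkey (Zs_nonneg X φ (m + 2))
      _ ≤ θ₀ ^ m * ∑ w ∈ langFinset (FTA X m) (m + 1), Real.exp (birkWord φ w) :=
          mul_le_mul_of_nonneg_left hTge (pow_nonneg hθ₀mem.1.le m)

end GibbsApprox
end
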